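/- arXiv:1812.04495 — 4 statements merged into one kernel-verified Lean document; each statement's English description precedes it below -/
import Mathlib

section
/- Let u : ℝ³ → ℝ³ be smooth with u = ∇·Φ for a smooth matrix-valued potential Φ : ℝ³ → ℝ^{3×3} (meaning u_j = ∂_i Φ_{ij}), and suppose the averaged sixth-power oscillation bound ⨍_{B(R)} |Φ − Φ_{B(R)}|⁶ dx ≤ C R holds for all R > 1. Let φ ∈ C_c^∞(B(R)) satisfy 0 ≤ φ ≤ 1, |∇φ| ≤ c R^{−1}, and ∫_{B(R)} φ dx ≥ c R³. Then the weighted mean satisfies |u_{B(R),φ}| ≤ C' R^{−5/6} for all R > 1, with C' independent of R. -/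
open MeasureTheory

noncomputable abbrev E3 : Type := EuclideanSpace ℝ (Fin 3)

/-- Partial derivative `∂_i f (x)`. -/
noncomputable def pd (f : E3 → ℝ) (i : Fin 3) (x : E3) : ℝ :=
  fderiv ℝ f x (EuclideanSpace.single i 1)

/-- Divergence of a matrix field: `(∇·Φ)_j = ∑_i ∂_i Φ_{ij}`. -/
noncomputable def matDiv (Φ : E3 → Fin 3 → Fin 3 → ℝ) (x : E3) (j : Fin 3) : ℝ :=
  ∑ i, pd (fun y => Φ y i j) i x

/-- Integration by parts on E3. -/
lemma ibp (ψ φ : E3 → ℝ) (hψ : ContDiff ℝ (⊤ : ℕ∞) ψ) (hφ : ContDiff ℝ (⊤ : ℕ∞) φ)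
    (hφc : HasCompactSupport φ) (v : E3) :
    ∫ x, fderiv ℝ ψ x v * φ x = -∫ x, fderiv ℝ φ x v * ψ x := by
  obtain ⟨M0, hM0⟩ := hφc.isBounded.subset_ball 0
  set M : ℝ := |M0| + 1 with hMdef
  have hM : tsupport φ ⊆ Metric.ball 0 M :=
    hM0.trans (Metric.ball_subset_ball (by simp [hMdef]; linarith [le_abs_self M0]))
  have hMpos : (0:ℝ) < M := by positivity
  set χb : ContDiffBump (0 : E3) := ⟨M, M + 1, hMpos, by linarith⟩ with hχdef
  set χ : E3 → ℝ := fun x => χb x with hχ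
  have hχ1 : ∀ x ∈ Metric.closedBall (0:E3) M, χ x = 1 := fun x hx => χb.one_of_mem_closedBall hx
  have hχsm : ContDiff ℝ (⊤ : ℕ∞) χ := χb.contDiff
  have hχc : HasCompactSupport χ := χb.hasCompactSupport
  set f : E3 → ℝ := fun x => ψ x * χ x with hf
  have hfsm : ContDiff ℝ (⊤ : ℕ∞) f := hψ.mul hχsm
  have hfc : HasCompactSupport f := hχc.mul_left
  obtain ⟨K, hK⟩ : ∃ K, LipschitzWith K f :=
    ContDiff.lipschitzWith_of_hasCompactSupport hfc hfsm (by norm_num)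
  obtain ⟨D, hD⟩ : ∃ D, LipschitzWith D φ :=
    ContDiff.lipschitzWith_of_hasCompactSupport hφc hφ (by norm_num)
  have key := LipschitzWith.integral_lineDeriv_mul_eq (μ := (volume : Measure E3)) hK hD hφc v
  have hL : ∀ x, lineDeriv ℝ f x v * φ x = fderiv ℝ ψ x v * φ x := by
    intro x
    by_cases hx : x ∈ tsupport φ
    · have hfd : f =ᶠ[nhds x] ψ := by
        have : Metric.ball (0:E3) M ∈ nhds x := (Metric.isOpen_ball).mem_nhds (hM hx)
        filter_upwards [this] with y hy
        simp [hf, hχ1 y (Metric.ball_subset_closedBall hy)]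
      rw [(hfsm.differentiable (by simp) x).lineDeriv_eq_fderiv, hfd.fderiv_eq]
    · have : φ x = 0 := image_eq_zero_of_notMem_tsupport hx
      simp [this]
  have hR : ∀ x, lineDeriv ℝ φ x (-v) * f x = -(fderiv ℝ φ x v * ψ x) := by
    intro x
    rw [(hφ.differentiable (by simp) x).lineDeriv_eq_fderiv]
    by_cases hx : x ∈ tsupport φ
    · have : χ x = 1 := hχ1 x (Metric.ball_subset_closedBall (hM hx))
      simp only [hf, this, map_neg, mul_one]
      ring
    · have : fderiv ℝ φ x = 0 := by
        have := support_fderiv_subset (𝕜 := ℝ) (f := φ)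
        by_contra h
        exact hx (this h)
      simp [this]
  simp only [hL, hR] at key
  rw [key, integral_neg]

lemma integral_pd_zero (φ : E3 → ℝ) (hφ : ContDiff ℝ (⊤ : ℕ∞) φ)
    (hφc : HasCompactSupport φ) (v : E3) :
    ∫ x, fderiv ℝ φ x v = 0 := by
  have := ibp (fun _ => 1) φ contDiff_const hφ hφc v
  simp only [fderiv_fun_const, Pi.zero_apply, ContinuousLinearMap.zero_apply, zero_mul,
    integral_zero, mul_one] at this
  linarith [this]

lemma le_rpow_inv6 {x y : ℝ} (hx : 0 ≤ x) (h : x ^ 6 ≤ y) : x ≤ y ^ ((6:ℝ)⁻¹) := by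
  have h0 : (0:ℝ) ≤ x ^ 6 := by positivity
  have := Real.rpow_le_rpow h0 h (by norm_num : (0:ℝ) ≤ (6:ℝ)⁻¹)
  rwa [← Real.rpow_natCast x 6, ← Real.rpow_mul hx, (by norm_num : ((6:ℕ):ℝ) * (6:ℝ)⁻¹ = 1),
    Real.rpow_one] at this

/-- If `u = ∇·Φ` with `Φ` smooth satisfying `⨍_{B(R)} |Φ - Φ_{B(R)}|⁶ ≤ C R` for all `R > 1`,
and `φ` is a cutoff with `0 ≤ φ ≤ 1`, `supp φ ⊆ B(R)`, `|∇φ| ≤ c R⁻¹` and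
`∫_{B(R)} φ ≥ c R³`, then the weighted mean satisfies `|u_{B(R),φ}| ≤ C' R^(-5/6)` for all
`R > 1`, with `C'` independent of `R`. -/
theorem stmt_4 (C c : ℝ) (hC : 0 < C) (hc : 0 < c)
    (u : E3 → Fin 3 → ℝ) (Φ : E3 → Fin 3 → Fin 3 → ℝ)
    (hu : ContDiff ℝ (⊤ : ℕ∞) u) (hΦ : ContDiff ℝ (⊤ : ℕ∞) Φ)
    (hdiv : ∀ x j, u x j = matDiv Φ x j)
    (hosc : ∀ R : ℝ, 1 < R →
      (⨍ x in Metric.ball (0 : E3) R,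
        ‖(fun (i j : Fin 3) => Φ x i j - ⨍ y in Metric.ball (0 : E3) R, Φ y i j)‖ ^ 6)
        ≤ C * R) :
    ∃ C' : ℝ, 0 < C' ∧ ∀ R : ℝ, 1 < R → ∀ φ : E3 → ℝ,
      ContDiff ℝ (⊤ : ℕ∞) φ → HasCompactSupport φ → tsupport φ ⊆ Metric.ball (0 : E3) R →
      (∀ x, 0 ≤ φ x) → (∀ x, φ x ≤ 1) →
      (∀ x, ‖fderiv ℝ φ x‖ ≤ c * R⁻¹) →
      c * R ^ 3 ≤ ∫ x in Metric.ball (0 : E3) R, φ x →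
      ‖(∫ x in Metric.ball (0 : E3) R, φ x)⁻¹ •
          ∫ x in Metric.ball (0 : E3) R, φ x • u x‖
        ≤ C' * R ^ (-(5 : ℝ) / 6) := by
  set κ : ℝ := (volume (Metric.ball (0:E3) 1)).toReal with hκ
  have hκpos : 0 < κ := by
    rw [hκ]
    exact ENNReal.toReal_pos (Metric.measure_ball_pos volume 0 one_pos).ne' measure_ball_lt_top.ne
  refine ⟨9 * κ * C ^ ((6:ℝ)⁻¹) + 1, by positivity, ?_⟩
  intro R hR φ hφsm hφc hφsupp hφ0 hφ1 hφd hφint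
  have hRpos : (0:ℝ) < R := lt_trans one_pos hR
  set B := Metric.ball (0:E3) R with hBdef
  -- smoothness in ℕ∞ terms
  have hφ' : ContDiff ℝ (⊤ : ℕ∞) φ := hφsm.of_le (by simp)
  have hΦ' : ContDiff ℝ (⊤ : ℕ∞) Φ := hΦ.of_le (by simp)
  have hΦij : ∀ i j, ContDiff ℝ (⊤ : ℕ∞) (fun y => Φ y i j) := fun i j =>
    ((ContinuousLinearMap.proj (R := ℝ) (φ := fun _ : Fin 3 => ℝ) j).contDiff.comp
      ((ContinuousLinearMap.proj (R := ℝ) (φ := fun _ : Fin 3 => Fin 3 → ℝ) i).contDiff.comp hΦ'))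
  -- volume of ball
  have hvolB : (volume B).toReal = R ^ 3 * κ := by
    rw [hBdef]
    rw [Measure.addHaar_ball volume (0:E3) hRpos.le]
    rw [ENNReal.toReal_mul, ENNReal.toReal_ofReal (by positivity)]
    norm_num [hκ]
  have hvolBpos : (0:ℝ) < (volume B).toReal := by rw [hvolB]; positivity
  -- averages
  set a : Fin 3 → Fin 3 → ℝ := fun i j => ⨍ y in B, Φ y i j with ha
  set g : E3 → ℝ := fun x => ‖(fun (i j : Fin 3) => Φ x i j - a i j)‖ with hg
  have hgcont : Continuous g := by
    apply Continuous.norm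
    exact continuous_pi fun i => continuous_pi fun j => ((hΦij i j).continuous).sub continuous_const
  have hg0 : ∀ x, 0 ≤ g x := fun x => norm_nonneg _
  -- Jensen
  haveI hfin : IsFiniteMeasure (volume.restrict B) :=
    ⟨by rw [Measure.restrict_apply_univ]; exact measure_ball_lt_top⟩
  haveI hNZ : NeZero (volume.restrict B) := by
    constructor
    simp only [ne_eq, Measure.restrict_eq_zero]
    exact (Metric.measure_ball_pos volume 0 hRpos).ne'
  have hgint : IntegrableOn g B volume :=
    (hgcont.locallyIntegrable.integrableOn_isCompact (isCompact_closedBall 0 R)).mono_set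
      Metric.ball_subset_closedBall
  have hg6int : IntegrableOn (fun x => g x ^ 6) B volume :=
    ((hgcont.pow 6).locallyIntegrable.integrableOn_isCompact (isCompact_closedBall 0 R)).mono_set
      Metric.ball_subset_closedBall
  have hjensen : (⨍ x in B, g x) ^ 6 ≤ ⨍ x in B, g x ^ 6 := by
    have hconv : ConvexOn ℝ (Set.Ici (0:ℝ)) (fun t : ℝ => t ^ 6) :=
      (Even.convexOn_pow (by decide)).subset (Set.subset_univ _) (convex_Ici 0)
    exact hconv.map_average_le (by fun_prop) isClosed_Ici
      (Filter.Eventually.of_forall fun x => hg0 x) hgint hg6int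
  have havg : ⨍ x in B, g x ≤ (C * R) ^ ((6:ℝ)⁻¹) := by
    apply le_rpow_inv6 ?_ (hjensen.trans (hosc R hR))
    rw [setAverage_eq, smul_eq_mul]
    exact mul_nonneg (by positivity) (setIntegral_nonneg Metric.isOpen_ball.measurableSet
      fun x _ => hg0 x)
  have hintg : ∫ x in B, g x ≤ R ^ 3 * κ * (C * R) ^ ((6:ℝ)⁻¹) := by
    rw [setAverage_eq, smul_eq_mul] at havg
    rw [← hvolB]
    calc ∫ x in B, g x = (volume B).toReal * ((volume B).toReal⁻¹ * ∫ x in B, g x) := by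
          field_simp
      _ ≤ (volume B).toReal * (C * R) ^ ((6:ℝ)⁻¹) := by
          exact mul_le_mul_of_nonneg_left havg hvolBpos.le
  -- coordinatewise bound
  have hpdφcont : ∀ i : Fin 3, Continuous (fun x => pd φ i x) := fun i =>
    (hφ'.continuous_fderiv (by simp)).clm_apply continuous_const
  have hpdφc : ∀ i : Fin 3, HasCompactSupport (fun x => pd φ i x) := fun i =>
    hφc.fderiv_apply ℝ (EuclideanSpace.single i 1)
  have hpdφ_bound : ∀ i x, |pd φ i x| ≤ c * R⁻¹ := by
    intro i x
    calc |pd φ i x| ≤ ‖fderiv ℝ φ x‖ * ‖EuclideanSpace.single (𝕜 := ℝ) i (1:ℝ)‖ :=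
          (fderiv ℝ φ x).le_opNorm _
      _ = ‖fderiv ℝ φ x‖ := by rw [EuclideanSpace.norm_single]; simp
      _ ≤ c * R⁻¹ := hφd x
  have hpdφ_zero : ∀ i : Fin 3, ∀ x, x ∉ B → pd φ i x = 0 := by
    intro i x hx
    have hxt : x ∉ tsupport φ := fun h => hx (hφsupp h)
    have : fderiv ℝ φ x = 0 := by
      by_contra h
      exact hxt (support_fderiv_subset (𝕜 := ℝ) (f := φ) h)
    simp [pd, this]
  have coordbound : ∀ j : Fin 3,
      |∫ x in B, φ x * u x j| ≤ 3 * ((c * R⁻¹) * ∫ x in B, g x) := by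
    intro j
    have key : ∀ i : Fin 3,
        ∫ x in B, φ x * pd (fun y => Φ y i j) i x
          = -∫ x in B, pd φ i x * (Φ x i j - a i j) := by
      intro i
      set v := EuclideanSpace.single (𝕜 := ℝ) i (1:ℝ) with hv
      have e1 : ∫ x in B, φ x * pd (fun y => Φ y i j) i x
          = ∫ x, fderiv ℝ (fun y => Φ y i j) x v * φ x := by
        rw [setIntegral_eq_integral_of_forall_compl_eq_zero
          (fun x hx => by rw [image_eq_zero_of_notMem_tsupport (fun h => hx (hφsupp h))]; ring)]
        congr 1; ext x; rw [mul_comm]; rfl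
      have e2 := ibp (fun y => Φ y i j) φ (hΦij i j) hφ' hφc v
      -- subtract constant
      have hzero : ∫ x, fderiv ℝ φ x v = 0 := integral_pd_zero φ hφ' hφc v
      have hint1 : Integrable (fun x => pd φ i x * (Φ x i j - a i j)) volume := by
        apply Continuous.integrable_of_hasCompactSupport
        · exact (hpdφcont i).mul (((hΦij i j).continuous).sub continuous_const)
        · exact (hpdφc i).mul_right
      have hint2 : Integrable (fun x => pd φ i x * a i j) volume := by
        apply Continuous.integrable_of_hasCompactSupport
        · exact (hpdφcont i).mul continuous_const
        · exact (hpdφc i).mul_right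
      have e3 : ∫ x, fderiv ℝ φ x v * Φ x i j
          = ∫ x, pd φ i x * (Φ x i j - a i j) := by
        have : (fun x => fderiv ℝ φ x v * Φ x i j)
            = fun x => pd φ i x * (Φ x i j - a i j) + pd φ i x * a i j := by
          ext x; simp only [pd]; ring
        rw [this, integral_add hint1 hint2]
        have : ∫ x, pd φ i x * a i j = (∫ x, pd φ i x) * a i j := by
          rw [← integral_mul_const]
        rw [this]
        have : ∫ x, pd φ i x = 0 := hzero
        rw [this, zero_mul, add_zero]
      have e4 : ∫ x, pd φ i x * (Φ x i j - a i j)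
          = ∫ x in B, pd φ i x * (Φ x i j - a i j) := by
        rw [setIntegral_eq_integral_of_forall_compl_eq_zero
          (fun x hx => by rw [hpdφ_zero i x hx, zero_mul])]
      rw [e1, e2, e3, e4]
    -- sum over i
    have hsum : ∫ x in B, φ x * u x j
        = ∑ i, ∫ x in B, φ x * pd (fun y => Φ y i j) i x := by
      rw [← integral_finset_sum]
      · congr 1; ext x
        simp only [hdiv x j, matDiv, Finset.mul_sum]
      · intro i _
        apply Integrable.integrableOn
        apply Continuous.integrable_of_hasCompactSupport
        · exact hφsm.continuous.mul (((hΦij i j).continuous_fderiv (by simp)).clm_apply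
            continuous_const)
        · exact hφc.mul_right
    have hterm : ∀ i : Fin 3, |∫ x in B, pd φ i x * (Φ x i j - a i j)|
        ≤ (c * R⁻¹) * ∫ x in B, g x := by
      intro i
      have h1 : |∫ x in B, pd φ i x * (Φ x i j - a i j)|
          ≤ ∫ x in B, |pd φ i x| * |Φ x i j - a i j| := by
        have := norm_integral_le_integral_norm (μ := volume.restrict B)
          (f := fun x => pd φ i x * (Φ x i j - a i j))
        simpa [Real.norm_eq_abs, abs_mul] using this
      refine h1.trans ?_
      rw [← integral_const_mul]
      apply setIntegral_mono_on
      · apply IntegrableOn.mono_set _ Metric.ball_subset_closedBall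
        exact (((hpdφcont i).abs.mul (((hΦij i j).continuous).sub
          continuous_const).abs)).locallyIntegrable.integrableOn_isCompact
          (isCompact_closedBall 0 R)
      · exact hgint.const_mul _
      · exact Metric.isOpen_ball.measurableSet
      · intro x _
        apply mul_le_mul (hpdφ_bound i x) ?_ (abs_nonneg _) (by positivity)
        calc |Φ x i j - a i j| ≤ ‖fun j' => Φ x i j' - a i j'‖ := by
              exact norm_le_pi_norm (fun j' => Φ x i j' - a i j') j
          _ ≤ g x := norm_le_pi_norm (fun i' (j' : Fin 3) => Φ x i' j' - a i' j') i
    calc |∫ x in B, φ x * u x j|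
        = |∑ i : Fin 3, -∫ x in B, pd φ i x * (Φ x i j - a i j)| := by
          rw [hsum]; congr 1; exact Finset.sum_congr rfl fun i _ => key i
      _ ≤ ∑ i : Fin 3, |∫ x in B, pd φ i x * (Φ x i j - a i j)| := by
          refine (Finset.abs_sum_le_sum_abs _ _).trans ?_
          simp [abs_neg]
      _ ≤ ∑ _i : Fin 3, (c * R⁻¹) * ∫ x in B, g x := Finset.sum_le_sum fun i _ => hterm i
      _ = 3 * ((c * R⁻¹) * ∫ x in B, g x) := by
          rw [Finset.sum_const, Finset.card_univ, Fintype.card_fin]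
          push_cast; ring
  -- assemble
  set I : ℝ := ∫ x in B, φ x with hI
  set J : Fin 3 → ℝ := ∫ x in B, φ x • u x with hJ
  have hIpos : 0 < I := lt_of_lt_of_le (by positivity) hφint
  have hJint : Integrable (fun x => φ x • u x) (volume.restrict B) := by
    apply Integrable.integrableOn
    apply Continuous.integrable_of_hasCompactSupport
    · exact hφsm.continuous.smul hu.continuous
    · exact hφc.smul_right
  have hJcoord : ∀ j, J j = ∫ x in B, φ x * u x j := by
    intro j
    have h := (ContinuousLinearMap.proj (R := ℝ) (φ := fun _ : Fin 3 => ℝ) j).integral_comp_comm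
      hJint
    calc J j = (ContinuousLinearMap.proj (R := ℝ) (φ := fun _ : Fin 3 => ℝ) j) J := rfl
      _ = ∫ x in B, (ContinuousLinearMap.proj (R := ℝ) (φ := fun _ : Fin 3 => ℝ) j)
            (φ x • u x) := h.symm
      _ = ∫ x in B, φ x * u x j := by
          congr 1
  set bnd : ℝ := 3 * ((c * R⁻¹) * (R ^ 3 * κ * (C * R) ^ ((6:ℝ)⁻¹))) with hbnd
  have hJnorm : ‖J‖ ≤ bnd := by
    apply pi_norm_le_iff_of_nonneg (by positivity) |>.2
    intro j
    rw [Real.norm_eq_abs, hJcoord j]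
    refine (coordbound j).trans ?_
    rw [hbnd]
    have : (c * R⁻¹) * ∫ x in B, g x ≤ (c * R⁻¹) * (R ^ 3 * κ * (C * R) ^ ((6:ℝ)⁻¹)) :=
      mul_le_mul_of_nonneg_left hintg (by positivity)
    linarith
  have final : ‖I⁻¹ • J‖ ≤ (c * R ^ 3)⁻¹ * bnd := by
    rw [norm_smul, Real.norm_eq_abs, abs_of_nonneg (inv_nonneg.2 hIpos.le)]
    apply mul_le_mul ?_ hJnorm (norm_nonneg _) (by positivity)
    exact inv_anti₀ (by positivity) hφint
  refine final.trans ?_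
  rw [hbnd]
  have hrw : (C * R) ^ ((6:ℝ)⁻¹) = C ^ ((6:ℝ)⁻¹) * R ^ ((6:ℝ)⁻¹) :=
    Real.mul_rpow hC.le hRpos.le
  have hrw2 : R ^ ((6:ℝ)⁻¹) * R⁻¹ = R ^ (-(5:ℝ)/6) := by
    rw [show (R:ℝ)⁻¹ = R ^ (-1:ℝ) from (Real.rpow_neg_one R).symm, ← Real.rpow_add hRpos]
    norm_num
  have hLHS : (c * R ^ 3)⁻¹ * (3 * ((c * R⁻¹) * (R ^ 3 * κ * (C * R) ^ ((6:ℝ)⁻¹))))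
      = 3 * κ * C ^ ((6:ℝ)⁻¹) * (R ^ ((6:ℝ)⁻¹) * R⁻¹) := by
    rw [hrw]
    field_simp
  rw [hLHS, hrw2]
  apply mul_le_mul_of_nonneg_right ?_ (Real.rpow_nonneg hRpos.le _)
  nlinarith [Real.rpow_nonneg hC.le ((6:ℝ)⁻¹), hκpos]
end

section
/- Let u : ℝ³ → ℝ³ be smooth with u = ∇·Φ, where Φ : ℝ³ → ℝ^{3×3} is smooth. Let ψ ∈ C^∞(ℝ³) with 0 ≤ ψ ≤ 1, ψ supported in B(R), and |∇ψ| ≤ c(R−ρ)^{−1} for some 1 ≤ ρ < R. Then ∫_{B(R)} |u|²ψ² dx ≤ C (∫_{B(R)} |Φ − Φ_{B(R)}|² dx)^{1/2} (∫_{B(R)} |∇u|² dx)^{1/2} + C (R−ρ)^{−1} (∫_{B(R)} |Φ − Φ_{B(R)}|² dx)^{1/2} (∫_{B(R)} |u|²ψ² dx)^{1/2}. -/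
open MeasureTheory

open Metric in
lemma aux_integrableOn_ball {f : E3 → ℝ} (hf : Continuous f) (R : ℝ) :
    IntegrableOn f (ball (0:E3) R) :=
  (hf.continuousOn.integrableOn_compact (isCompact_closedBall (0:E3) R)).mono_set
    ball_subset_closedBall

open Metric in
lemma aux_cs_ball {f g : E3 → ℝ} (hf : Continuous f) (hg : Continuous g)
    (hf0 : ∀ x, 0 ≤ f x) (hg0 : ∀ x, 0 ≤ g x) (R : ℝ) :
    ∫ x in ball (0:E3) R, f x * g x ≤
      (∫ x in ball (0:E3) R, f x ^ 2) ^ ((1:ℝ)/2) * (∫ x in ball (0:E3) R, g x ^ 2) ^ ((1:ℝ)/2) := by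
  set μr := volume.restrict (ball (0:E3) R) with hμr
  haveI : IsFiniteMeasure μr := ⟨by
    rw [hμr, Measure.restrict_apply_univ]; exact measure_ball_lt_top⟩
  obtain ⟨Cf, hCf⟩ := (isCompact_closedBall (0:E3) R).exists_bound_of_continuousOn hf.continuousOn
  obtain ⟨Cg, hCg⟩ := (isCompact_closedBall (0:E3) R).exists_bound_of_continuousOn hg.continuousOn
  have hmf : MemLp f (ENNReal.ofReal 2) μr := by
    refine MemLp.of_bound hf.aestronglyMeasurable Cf ?_
    rw [hμr]
    exact (ae_restrict_iff' measurableSet_ball).2 (ae_of_all _ fun x hx =>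
      hCf x (ball_subset_closedBall hx))
  have hmg : MemLp g (ENNReal.ofReal 2) μr := by
    refine MemLp.of_bound hg.aestronglyMeasurable Cg ?_
    rw [hμr]
    exact (ae_restrict_iff' measurableSet_ball).2 (ae_of_all _ fun x hx =>
      hCg x (ball_subset_closedBall hx))
  have h := integral_mul_le_Lp_mul_Lq_of_nonneg (μ := μr)
    (p := 2) (q := 2) ⟨by norm_num, by norm_num, by norm_num⟩ (ae_of_all _ hf0) (ae_of_all _ hg0) hmf hmg
  have h2 : ∀ h : E3 → ℝ, (∫ x, h x ^ (2:ℝ) ∂μr) = ∫ x, h x ^ 2 ∂μr := by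
    intro h
    refine integral_congr_ae (ae_of_all _ fun x => ?_)
    exact_mod_cast Real.rpow_natCast (h x) 2
  rw [h2 f, h2 g] at h
  simpa using h

open Metric in
/-- Integration by parts on `ℝ³`: if `G` is smooth with compact support inside `B(R)`
and `F` is smooth, then `∫ ∂_v F · G = - ∫ F · ∂_v G`. -/
lemma aux_ibp {F G : E3 → ℝ} (hF : ContDiff ℝ (⊤ : ℕ∞) F) (hG : ContDiff ℝ (⊤ : ℕ∞) G)
    (hGsupp : HasCompactSupport G) {R : ℝ} (hR : 0 < R)
    (hGR : tsupport G ⊆ ball (0:E3) R) (v : E3) :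
    ∫ x, fderiv ℝ F x v * G x = - ∫ x, F x * fderiv ℝ G x v := by
  set η : ContDiffBump (0:E3) := ⟨R, R+1, hR, by linarith⟩ with hη
  set f : E3 → ℝ := fun x => η x * F x with hf
  have hF1 : ContDiff ℝ 1 F := hF.of_le (by simp)
  have hG1 : ContDiff ℝ 1 G := hG.of_le (by simp)
  have hη1 : ContDiff ℝ 1 (η : E3 → ℝ) := by exact_mod_cast η.contDiff (n := 1)
  have hfc : ContDiff ℝ 1 f := hη1.mul hF1
  have hfsupp : HasCompactSupport f := η.hasCompactSupport.mul_right
  obtain ⟨Cf, hCf⟩ := hfc.lipschitzWith_of_hasCompactSupport hfsupp one_ne_zero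
  obtain ⟨Cg, hCg⟩ := hG1.lipschitzWith_of_hasCompactSupport hGsupp one_ne_zero
  have key := LipschitzWith.integral_lineDeriv_mul_eq (μ := volume) hCf hCg hGsupp v
  have hfF : ∀ x ∈ ball (0:E3) R, f =ᶠ[nhds x] F := by
    intro x hx
    filter_upwards [isOpen_ball.mem_nhds hx] with y hy
    have : η y = 1 := η.one_of_mem_closedBall (ball_subset_closedBall hy)
    simp [hf, this]
  have hL : ∀ x : E3, lineDeriv ℝ f x v * G x = fderiv ℝ F x v * G x := by
    intro x
    by_cases hGx : G x = 0
    · simp [hGx]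
    · have hx : x ∈ ball (0:E3) R :=
        hGR (subset_tsupport G (Function.mem_support.2 hGx))
      have h1 : lineDeriv ℝ f x v = fderiv ℝ f x v :=
        (hfc.differentiable one_ne_zero x).lineDeriv_eq_fderiv
      rw [h1, (hfF x hx).fderiv_eq]
  have hRt : ∀ x : E3, lineDeriv ℝ G x (-v) * f x = -(F x * fderiv ℝ G x v) := by
    intro x
    have h1 : lineDeriv ℝ G x (-v) = fderiv ℝ G x (-v) :=
      (hG1.differentiable one_ne_zero x).lineDeriv_eq_fderiv
    rw [h1, map_neg]
    by_cases hx : x ∈ ball (0:E3) R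
    · have : f x = F x := (hfF x hx).eq_of_nhds
      rw [this]; ring
    · have hx' : x ∉ tsupport G := fun h => hx (hGR h)
      rw [fderiv_of_notMem_tsupport _ hx']; simp
  calc ∫ x, fderiv ℝ F x v * G x = ∫ x, lineDeriv ℝ f x v * G x :=
        integral_congr_ae (ae_of_all _ fun x => (hL x).symm)
    _ = ∫ x, lineDeriv ℝ G x (-v) * f x := key
    _ = ∫ x, -(F x * fderiv ℝ G x v) := integral_congr_ae (ae_of_all _ hRt)
    _ = - ∫ x, F x * fderiv ℝ G x v := integral_neg _

set_option maxHeartbeats 1000000 in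
/-- For `u = ∇·Φ` and a cutoff `ψ` with `0 ≤ ψ ≤ 1` supported in `B(R)` and
`|∇ψ| ≤ c (R-ρ)⁻¹` (with `1 ≤ ρ < R`), one has
`∫ |u|²ψ² ≤ C (∫|Φ-Φ_{B(R)}|²)^(1/2) (∫|∇u|²)^(1/2)
  + C (R-ρ)⁻¹ (∫|Φ-Φ_{B(R)}|²)^(1/2) (∫|u|²ψ²)^(1/2)`. -/
theorem stmt_5 (c : ℝ) (hc : 0 < c) :
    ∃ C : ℝ, 0 < C ∧
      ∀ (R ρ : ℝ) (u : E3 → Fin 3 → ℝ) (Φ : E3 → Fin 3 → Fin 3 → ℝ) (ψ : E3 → ℝ),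
        1 ≤ ρ → ρ < R →
        ContDiff ℝ (⊤ : ℕ∞) u → ContDiff ℝ (⊤ : ℕ∞) Φ →
        (∀ x j, u x j = matDiv Φ x j) →
        ContDiff ℝ (⊤ : ℕ∞) ψ → (∀ x, 0 ≤ ψ x) → (∀ x, ψ x ≤ 1) →
        tsupport ψ ⊆ Metric.ball (0 : E3) R →
        (∀ x, ‖fderiv ℝ ψ x‖ ≤ c * (R - ρ)⁻¹) →
        (∫ x in Metric.ball (0 : E3) R, ‖u x‖ ^ 2 * ψ x ^ 2)
          ≤ C * (∫ x in Metric.ball (0 : E3) R,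
                ‖(fun (i j : Fin 3) => Φ x i j - ⨍ y in Metric.ball (0 : E3) R, Φ y i j)‖ ^ 2)
                ^ ((1 : ℝ) / 2)
              * (∫ x in Metric.ball (0 : E3) R, ‖fderiv ℝ u x‖ ^ 2) ^ ((1 : ℝ) / 2)
            + C * (R - ρ)⁻¹
              * (∫ x in Metric.ball (0 : E3) R,
                ‖(fun (i j : Fin 3) => Φ x i j - ⨍ y in Metric.ball (0 : E3) R, Φ y i j)‖ ^ 2)
                ^ ((1 : ℝ) / 2)
              * (∫ x in Metric.ball (0 : E3) R, ‖u x‖ ^ 2 * ψ x ^ 2) ^ ((1 : ℝ) / 2) := by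
  classical
  refine ⟨9 + 18 * c, by linarith, ?_⟩
  intro R ρ u Φ ψ hρ hρR hu hΦ huΦ hψ hψ0 hψ1 hψsupp hψgrad
  have hR0 : (0:ℝ) < R := by linarith
  have hRρ : (0:ℝ) < R - ρ := by linarith
  set B := Metric.ball (0:E3) R with hB
  set K := c * (R - ρ)⁻¹ with hK
  have hK0 : 0 ≤ K := by positivity
  set M : Fin 3 → Fin 3 → ℝ := fun i j => ⨍ y in B, Φ y i j with hM
  set Ψ : Fin 3 → Fin 3 → E3 → ℝ := fun i j x => Φ x i j - M i j with hΨdef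
  set N : E3 → ℝ := fun x => ‖(fun i j => Φ x i j - M i j)‖ with hN
  -- basic smoothness/continuity
  have hΦij : ∀ i j, ContDiff ℝ (⊤ : ℕ∞) (fun x => Φ x i j) := fun i j =>
    (contDiff_pi.mp ((contDiff_pi.mp hΦ) i) j)
  have hΨc : ∀ i j, ContDiff ℝ (⊤ : ℕ∞) (Ψ i j) := fun i j =>
    (hΦij i j).sub contDiff_const
  have huj : ∀ j, ContDiff ℝ (⊤ : ℕ∞) (fun x => u x j) := fun j => contDiff_pi.mp hu j
  have hNc : Continuous N := by
    refine Continuous.norm (continuous_pi fun i => continuous_pi fun j => ?_)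
    exact ((hΦij i j).continuous).sub continuous_const
  have hN0 : ∀ x, 0 ≤ N x := fun x => norm_nonneg _
  have hDuc : Continuous fun x => ‖fderiv ℝ u x‖ :=
    (hu.continuous_fderiv (by simp)).norm
  -- cutoff support facts
  have hψcs : HasCompactSupport ψ :=
    Metric.isCompact_of_isClosed_isBounded (isClosed_tsupport ψ)
      (Metric.isBounded_ball.subset hψsupp)
  -- the test functions g j = u_j ψ²
  set g : Fin 3 → E3 → ℝ := fun j x => u x j * (ψ x * ψ x) with hg
  have hgc : ∀ j, ContDiff ℝ (⊤ : ℕ∞) (g j) := fun j => (huj j).mul (hψ.mul hψ)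
  have hgsupp : ∀ j, tsupport (g j) ⊆ tsupport ψ := by
    intro j
    refine closure_mono ?_
    intro x hx
    simp only [Function.mem_support] at hx ⊢
    intro h0
    exact hx (by simp [hg, h0])
  have hgcs : ∀ j, HasCompactSupport (g j) := fun j =>
    hψcs.of_isClosed_subset (isClosed_tsupport _) (hgsupp j)
  have hgR : ∀ j, tsupport (g j) ⊆ B := fun j => (hgsupp j).trans hψsupp
  -- derivative of g
  have hd : ∀ j x, HasFDerivAt (g j)
      ((u x j) • (ψ x • fderiv ℝ ψ x + ψ x • fderiv ℝ ψ x)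
        + (ψ x * ψ x) • fderiv ℝ (fun y => u y j) x) x := by
    intro j x
    exact (((huj j).differentiable (by simp) x).hasFDerivAt).mul
      (((hψ.differentiable (by simp) x).hasFDerivAt).mul
        ((hψ.differentiable (by simp) x).hasFDerivAt))
  -- pointwise bound for |∂_i (g j)|
  have hproj : ∀ j x (v : E3), fderiv ℝ (fun y => u y j) x v = fderiv ℝ u x v j := by
    intro j x v
    have h1 : HasFDerivAt (⇑(ContinuousLinearMap.proj (R := ℝ) (φ := fun _ : Fin 3 => ℝ) j) ∘ u)
        ((ContinuousLinearMap.proj (R := ℝ) (φ := fun _ : Fin 3 => ℝ) j).comp (fderiv ℝ u x)) x :=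
      (ContinuousLinearMap.proj j).hasFDerivAt.comp x
        ((hu.differentiable (by simp) x).hasFDerivAt)
    have h2 : HasFDerivAt (fun y => u y j)
        ((ContinuousLinearMap.proj (R := ℝ) (φ := fun _ : Fin 3 => ℝ) j).comp (fderiv ℝ u x)) x := h1
    rw [h2.fderiv]; rfl
  have hDbound : ∀ i j x, |fderiv ℝ (g j) x (EuclideanSpace.single i (1:ℝ))| ≤
      ψ x ^ 2 * ‖fderiv ℝ u x‖ + 2 * K * (‖u x‖ * ψ x) := by
    intro i j x
    set v : E3 := EuclideanSpace.single i (1:ℝ) with hv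
    have hvnorm : ‖v‖ = 1 := by simp [hv, EuclideanSpace.norm_single]
    rw [(hd j x).fderiv]
    simp only [ContinuousLinearMap.add_apply, ContinuousLinearMap.smul_apply, smul_eq_mul]
    have h1 : |fderiv ℝ ψ x v| ≤ K := by
      calc |fderiv ℝ ψ x v| ≤ ‖fderiv ℝ ψ x‖ * ‖v‖ := (fderiv ℝ ψ x).le_opNorm v
        _ = ‖fderiv ℝ ψ x‖ := by rw [hvnorm, mul_one]
        _ ≤ K := hψgrad x
    have h2 : |fderiv ℝ (fun y => u y j) x v| ≤ ‖fderiv ℝ u x‖ := by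
      rw [hproj j x v]
      calc |fderiv ℝ u x v j| ≤ ‖fderiv ℝ u x v‖ := by
            simpa using norm_le_pi_norm (fderiv ℝ u x v) j
        _ ≤ ‖fderiv ℝ u x‖ * ‖v‖ := (fderiv ℝ u x).le_opNorm v
        _ = ‖fderiv ℝ u x‖ := by rw [hvnorm, mul_one]
    have h3 : |u x j| ≤ ‖u x‖ := by simpa using norm_le_pi_norm (u x) j
    have hψx0 := hψ0 x
    have h4 : |u x j * (ψ x * fderiv ℝ ψ x v + ψ x * fderiv ℝ ψ x v)| ≤
        2 * K * (‖u x‖ * ψ x) := by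
      rw [abs_mul]
      have : |ψ x * fderiv ℝ ψ x v + ψ x * fderiv ℝ ψ x v| ≤ 2 * (ψ x * K) := by
        calc |ψ x * fderiv ℝ ψ x v + ψ x * fderiv ℝ ψ x v|
            ≤ |ψ x * fderiv ℝ ψ x v| + |ψ x * fderiv ℝ ψ x v| := abs_add_le _ _
          _ = 2 * (ψ x * |fderiv ℝ ψ x v|) := by
              rw [abs_mul, abs_of_nonneg hψx0]; ring
          _ ≤ 2 * (ψ x * K) := by
              have := mul_le_mul_of_nonneg_left h1 hψx0
              linarith
      calc |u x j| * |ψ x * fderiv ℝ ψ x v + ψ x * fderiv ℝ ψ x v|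
          ≤ ‖u x‖ * (2 * (ψ x * K)) :=
            mul_le_mul h3 this (abs_nonneg _) (norm_nonneg _)
        _ = 2 * K * (‖u x‖ * ψ x) := by ring
    have h5 : |(ψ x * ψ x) * fderiv ℝ (fun y => u y j) x v| ≤
        ψ x ^ 2 * ‖fderiv ℝ u x‖ := by
      rw [abs_mul, abs_of_nonneg (mul_nonneg hψx0 hψx0)]
      have : ψ x * ψ x = ψ x ^ 2 := by ring
      rw [this]
      exact mul_le_mul_of_nonneg_left h2 (by positivity)
    calc |u x j * (ψ x * fderiv ℝ ψ x v + ψ x * fderiv ℝ ψ x v)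
          + (ψ x * ψ x) * fderiv ℝ (fun y => u y j) x v|
        ≤ |u x j * (ψ x * fderiv ℝ ψ x v + ψ x * fderiv ℝ ψ x v)|
          + |(ψ x * ψ x) * fderiv ℝ (fun y => u y j) x v| := abs_add_le _ _
      _ ≤ 2 * K * (‖u x‖ * ψ x) + ψ x ^ 2 * ‖fderiv ℝ u x‖ := by
          exact add_le_add h4 h5
      _ = ψ x ^ 2 * ‖fderiv ℝ u x‖ + 2 * K * (‖u x‖ * ψ x) := by ring
  -- continuity of derivative evaluations
  have hDΨc : ∀ i j, Continuous fun x => fderiv ℝ (Ψ i j) x (EuclideanSpace.single i (1:ℝ)) :=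
    fun i j => ((hΨc i j).continuous_fderiv (by simp)).clm_apply continuous_const
  have hDgc : ∀ (i : Fin 3) j, Continuous fun x => fderiv ℝ (g j) x (EuclideanSpace.single i (1:ℝ)) :=
    fun i j => ((hgc j).continuous_fderiv (by simp)).clm_apply continuous_const
  have hInt1 : ∀ i j, Integrable
      (fun x => fderiv ℝ (Ψ i j) x (EuclideanSpace.single i (1:ℝ)) * g j x) := by
    intro i j
    refine Continuous.integrable_of_hasCompactSupport
      ((hDΨc i j).mul (hgc j).continuous) ((hgcs j).mul_left)
  -- key pointwise identity
  have hpoint : ∀ x, (∑ j, (u x j)^2) * ψ x ^ 2 =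
      ∑ j, ∑ i, fderiv ℝ (Ψ i j) x (EuclideanSpace.single i (1:ℝ)) * g j x := by
    intro x
    have hdiv : ∀ j, ∑ i, fderiv ℝ (Ψ i j) x (EuclideanSpace.single i (1:ℝ)) = u x j := by
      intro j
      rw [huΦ x j]
      simp only [matDiv, pd, hΨdef]
      exact Finset.sum_congr rfl fun i _ => by rw [fderiv_sub_const]
    calc (∑ j, (u x j)^2) * ψ x ^ 2 = ∑ j, u x j * g j x := by
          rw [Finset.sum_mul]
          exact Finset.sum_congr rfl fun j _ => by simp only [hg]; ring
      _ = ∑ j, ∑ i, fderiv ℝ (Ψ i j) x (EuclideanSpace.single i (1:ℝ)) * g j x := by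
          exact Finset.sum_congr rfl fun j _ => by rw [← Finset.sum_mul, hdiv j]
  -- Step 1 : bound the sup-norm by the Euclidean sum of squares
  have step1 : (∫ x in B, ‖u x‖ ^ 2 * ψ x ^ 2) ≤ ∫ x in B, (∑ j, (u x j)^2) * ψ x ^ 2 := by
    refine setIntegral_mono_on
      (aux_integrableOn_ball ((hu.continuous.norm.pow 2).mul ((hψ.continuous).pow 2)) R)
      (aux_integrableOn_ball ((continuous_finset_sum _ fun j _ =>
        ((huj j).continuous).pow 2).mul ((hψ.continuous).pow 2)) R)
      measurableSet_ball (fun x _ => ?_)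
    have hsum0 : (0:ℝ) ≤ ∑ j, (u x j)^2 :=
      Finset.sum_nonneg fun j _ => sq_nonneg _
    have hle : ‖u x‖ ≤ Real.sqrt (∑ j, (u x j)^2) := by
      refine pi_norm_le_iff_of_nonneg (Real.sqrt_nonneg _) |>.2 fun j => ?_
      rw [Real.norm_eq_abs, ← Real.sqrt_sq_eq_abs]
      exact Real.sqrt_le_sqrt (Finset.single_le_sum (fun j _ => sq_nonneg (u x j))
        (Finset.mem_univ j))
    have h2 : ‖u x‖ ^ 2 ≤ ∑ j, (u x j)^2 := by
      calc ‖u x‖ ^ 2 ≤ Real.sqrt (∑ j, (u x j)^2) ^ 2 :=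
            pow_le_pow_left₀ (norm_nonneg _) hle 2
        _ = ∑ j, (u x j)^2 := Real.sq_sqrt hsum0
    exact mul_le_mul_of_nonneg_right h2 (sq_nonneg _)
  -- Step 2 : extend the integral to all of ℝ³
  have step2 : ∫ x in B, (∑ j, (u x j)^2) * ψ x ^ 2 = ∫ x, (∑ j, (u x j)^2) * ψ x ^ 2 := by
    refine setIntegral_eq_integral_of_forall_compl_eq_zero fun x hx => ?_
    have : ψ x = 0 := image_eq_zero_of_notMem_tsupport (fun h => hx (hψsupp h))
    simp [this]
  -- Step 3 : rewrite as a sum and integrate term by term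
  have step3 : ∫ x, (∑ j, (u x j)^2) * ψ x ^ 2 =
      ∑ j, ∑ i, ∫ x, fderiv ℝ (Ψ i j) x (EuclideanSpace.single i (1:ℝ)) * g j x := by
    rw [integral_congr_ae (ae_of_all _ hpoint)]
    rw [integral_finset_sum _ (fun j _ => integrable_finset_sum _ fun i _ => hInt1 i j)]
    exact Finset.sum_congr rfl fun j _ => integral_finset_sum _ fun i _ => hInt1 i j
  -- Step 4 : integration by parts
  have step4 : ∀ i j, ∫ x, fderiv ℝ (Ψ i j) x (EuclideanSpace.single i (1:ℝ)) * g j x =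
      - ∫ x, Ψ i j x * fderiv ℝ (g j) x (EuclideanSpace.single i (1:ℝ)) :=
    fun i j => aux_ibp (hΨc i j) (hgc j) (hgcs j) hR0 (hgR j) _
  -- Step 5 : bound each term
  set W : ℝ := ∫ x in B, N x * (ψ x ^ 2 * ‖fderiv ℝ u x‖ + 2 * K * (‖u x‖ * ψ x)) with hW
  have hWc : Continuous fun x => N x * (ψ x ^ 2 * ‖fderiv ℝ u x‖ + 2 * K * (‖u x‖ * ψ x)) := by
    exact hNc.mul ((((hψ.continuous).pow 2).mul hDuc).add
      (continuous_const.mul ((hu.continuous.norm).mul hψ.continuous)))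
  have step5 : ∀ i j, - ∫ x, Ψ i j x * fderiv ℝ (g j) x (EuclideanSpace.single i (1:ℝ)) ≤ W := by
    intro i j
    have hzero : ∀ x, x ∉ B → fderiv ℝ (g j) x = 0 := fun x hx =>
      fderiv_of_notMem_tsupport _ (fun h => hx (hgR j h))
    have e1 : - ∫ x, Ψ i j x * fderiv ℝ (g j) x (EuclideanSpace.single i (1:ℝ)) =
        ∫ x in B, -(Ψ i j x * fderiv ℝ (g j) x (EuclideanSpace.single i (1:ℝ))) := by
      rw [← integral_neg]
      exact (setIntegral_eq_integral_of_forall_compl_eq_zero fun x hx => by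
        rw [hzero x hx]; simp).symm
    rw [e1, hW]
    refine setIntegral_mono_on
      (aux_integrableOn_ball (((hΨc i j).continuous.mul (hDgc i j)).neg) R)
      (aux_integrableOn_ball hWc R) measurableSet_ball (fun x _ => ?_)
    have hΨN : |Ψ i j x| ≤ N x := by
      have h1 : |Ψ i j x| ≤ ‖fun j' => Φ x i j' - M i j'‖ := by
        simpa [hΨdef] using norm_le_pi_norm (fun j' => Φ x i j' - M i j') j
      have h2 : ‖fun j' => Φ x i j' - M i j'‖ ≤ N x := by
        simpa [hN] using norm_le_pi_norm (fun i' j' => Φ x i' j' - M i' j') i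
      exact h1.trans h2
    calc -(Ψ i j x * fderiv ℝ (g j) x (EuclideanSpace.single i (1:ℝ)))
        ≤ |Ψ i j x * fderiv ℝ (g j) x (EuclideanSpace.single i (1:ℝ))| := neg_le_abs _
      _ = |Ψ i j x| * |fderiv ℝ (g j) x (EuclideanSpace.single i (1:ℝ))| := abs_mul _ _
      _ ≤ N x * (ψ x ^ 2 * ‖fderiv ℝ u x‖ + 2 * K * (‖u x‖ * ψ x)) :=
          mul_le_mul hΨN (hDbound i j x) (abs_nonneg _) (hN0 x)
  -- put the sum together
  have hsum : ∑ j : Fin 3, ∑ i : Fin 3, W = 9 * W := by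
    simp [Finset.sum_const, Finset.card_univ]; ring
  have main1 : (∫ x in B, ‖u x‖ ^ 2 * ψ x ^ 2) ≤ 9 * W := by
    calc (∫ x in B, ‖u x‖ ^ 2 * ψ x ^ 2)
        ≤ ∫ x in B, (∑ j, (u x j)^2) * ψ x ^ 2 := step1
      _ = ∑ j, ∑ i, ∫ x, fderiv ℝ (Ψ i j) x (EuclideanSpace.single i (1:ℝ)) * g j x :=
          step2.trans step3
      _ ≤ ∑ j : Fin 3, ∑ i : Fin 3, W := by
          refine Finset.sum_le_sum fun j _ => Finset.sum_le_sum fun i _ => ?_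
          rw [step4 i j]; exact step5 i j
      _ = 9 * W := hsum
  -- introduce the three main quantities
  set X := ∫ x in B, N x ^ 2 with hX
  set Y := ∫ x in B, ‖fderiv ℝ u x‖ ^ 2 with hY
  have hX0 : 0 ≤ X := setIntegral_nonneg measurableSet_ball fun x _ => sq_nonneg _
  have hY0 : 0 ≤ Y := setIntegral_nonneg measurableSet_ball fun x _ => sq_nonneg _
  have hL0 : 0 ≤ ∫ x in B, ‖u x‖ ^ 2 * ψ x ^ 2 :=
    setIntegral_nonneg measurableSet_ball fun x _ =>
      mul_nonneg (sq_nonneg _) (sq_nonneg _)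
  set L := ∫ x in B, ‖u x‖ ^ 2 * ψ x ^ 2 with hL
  -- Cauchy-Schwarz estimates
  have hW2 : W ≤ X ^ ((1:ℝ)/2) * Y ^ ((1:ℝ)/2)
      + 2 * K * (X ^ ((1:ℝ)/2) * L ^ ((1:ℝ)/2)) := by
    have c1 : Continuous fun x => N x * (ψ x ^ 2 * ‖fderiv ℝ u x‖) :=
      hNc.mul (((hψ.continuous).pow 2).mul hDuc)
    have c2 : Continuous fun x => N x * (2 * K * (‖u x‖ * ψ x)) :=
      hNc.mul (continuous_const.mul ((hu.continuous.norm).mul hψ.continuous))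
    have hsplit : W = (∫ x in B, N x * (ψ x ^ 2 * ‖fderiv ℝ u x‖))
        + ∫ x in B, N x * (2 * K * (‖u x‖ * ψ x)) := by
      rw [hW, ← integral_add (aux_integrableOn_ball c1 R) (aux_integrableOn_ball c2 R)]
      exact integral_congr_ae (ae_of_all _ fun x => by ring)
    have hA : (∫ x in B, N x * (ψ x ^ 2 * ‖fderiv ℝ u x‖)) ≤
        X ^ ((1:ℝ)/2) * Y ^ ((1:ℝ)/2) := by
      have h1 : (∫ x in B, N x * (ψ x ^ 2 * ‖fderiv ℝ u x‖)) ≤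
          ∫ x in B, N x * ‖fderiv ℝ u x‖ := by
        refine setIntegral_mono_on (aux_integrableOn_ball c1 R)
          (aux_integrableOn_ball (hNc.mul hDuc) R) measurableSet_ball (fun x _ => ?_)
        have h01 : ψ x ^ 2 ≤ 1 := by nlinarith [hψ0 x, hψ1 x]
        have : ψ x ^ 2 * ‖fderiv ℝ u x‖ ≤ ‖fderiv ℝ u x‖ := by
          nlinarith [mul_le_mul_of_nonneg_right h01 (norm_nonneg (fderiv ℝ u x))]
        exact mul_le_mul_of_nonneg_left this (hN0 x)
      exact h1.trans (aux_cs_ball hNc hDuc hN0 (fun x => norm_nonneg _) R)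
    have hB2 : (∫ x in B, N x * (2 * K * (‖u x‖ * ψ x))) ≤
        2 * K * (X ^ ((1:ℝ)/2) * L ^ ((1:ℝ)/2)) := by
      have e : (∫ x in B, N x * (2 * K * (‖u x‖ * ψ x))) =
          2 * K * ∫ x in B, N x * (‖u x‖ * ψ x) := by
        rw [← integral_const_mul]
        exact integral_congr_ae (ae_of_all _ fun x => by ring)
      rw [e]
      have hcs := aux_cs_ball (g := fun x => ‖u x‖ * ψ x) hNc ((hu.continuous.norm).mul hψ.continuous) hN0
        (fun x => mul_nonneg (norm_nonneg _) (hψ0 x)) R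
      have e2 : (∫ x in B, (‖u x‖ * ψ x) ^ 2) = L := by
        rw [hL]
        exact integral_congr_ae (ae_of_all _ fun x => by ring)
      rw [e2] at hcs
      exact mul_le_mul_of_nonneg_left hcs (by positivity)
    rw [hsplit]
    exact add_le_add hA hB2
  -- final arithmetic
  have hX12 : 0 ≤ X ^ ((1:ℝ)/2) := Real.rpow_nonneg hX0 _
  have hY12 : 0 ≤ Y ^ ((1:ℝ)/2) := Real.rpow_nonneg hY0 _
  have hL12 : 0 ≤ L ^ ((1:ℝ)/2) := Real.rpow_nonneg hL0 _
  have hinv : 0 ≤ (R - ρ)⁻¹ := by positivity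
  rw [hK] at hW2
  nlinarith [main1, hW2, mul_nonneg hX12 hY12, mul_nonneg (mul_nonneg hinv hX12) hL12,
    hc.le, mul_nonneg hX12 hL12]
end

section
/- Let f : [ρ₀, R₀] → [0, ∞) be bounded, and suppose there exist θ ∈ [0,1), A, B ≥ 0, and α ≥ β > 0 such that for all ρ₀ ≤ ρ < R ≤ R₀, f(ρ) ≤ θ f(R) + A (R−ρ)^{−α} + B (R−ρ)^{−β}. Then there exists a constant c depending only on θ and α such that for all ρ₀ ≤ ρ < R ≤ R₀, f(ρ) ≤ c (A (R−ρ)^{−α} + B (R−ρ)^{−β}). -/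
/-- The classical iteration (hole-filling) lemma of Giaquinta: if a bounded nonnegative
`f` on `[ρ₀, R₀]` satisfies `f ρ ≤ θ f R + A (R-ρ)^(-α) + B (R-ρ)^(-β)` for all
`ρ₀ ≤ ρ < R ≤ R₀`, with `θ ∈ [0,1)`, `A, B ≥ 0`, `α ≥ β > 0`, then there is a constant
`c = c(θ, α)` such that `f ρ ≤ c (A (R-ρ)^(-α) + B (R-ρ)^(-β))` in the same range. -/
theorem stmt_8 (θ α : ℝ) (hθ0 : 0 ≤ θ) (hθ1 : θ < 1) (hα : 0 < α) :
    ∃ c : ℝ, 0 < c ∧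
      ∀ (f : ℝ → ℝ) (β A B ρ₀ R₀ : ℝ), 0 < β → β ≤ α → 0 ≤ A → 0 ≤ B → ρ₀ ≤ R₀ →
        (∀ x ∈ Set.Icc ρ₀ R₀, 0 ≤ f x) →
        (∃ M : ℝ, ∀ x ∈ Set.Icc ρ₀ R₀, f x ≤ M) →
        (∀ ρ R : ℝ, ρ₀ ≤ ρ → ρ < R → R ≤ R₀ →
          f ρ ≤ θ * f R + A * (R - ρ) ^ (-α) + B * (R - ρ) ^ (-β)) →
        ∀ ρ R : ℝ, ρ₀ ≤ ρ → ρ < R → R ≤ R₀ →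
          f ρ ≤ c * (A * (R - ρ) ^ (-α) + B * (R - ρ) ^ (-β)) := by
  set μ : ℝ := (1 + θ) / 2 with hμdef
  have hμ0 : 0 < μ := by positivity
  have hμ1 : μ < 1 := by rw [hμdef]; linarith
  set l : ℝ := μ ^ (α⁻¹ : ℝ) with hldef
  have hl0 : 0 < l := Real.rpow_pos_of_pos hμ0 _
  have hl1 : l < 1 := by
    rw [hldef]
    exact Real.rpow_lt_one hμ0.le hμ1 (by positivity)
  have hlα : l ^ (-α) = μ⁻¹ := by
    rw [hldef, ← Real.rpow_mul hμ0.le,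
      show α⁻¹ * (-α) = -1 by rw [mul_neg, inv_mul_cancel₀ hα.ne'],
      Real.rpow_neg_one]
  set r : ℝ := μ⁻¹ with hrdef
  have hr1 : 1 ≤ r := by
    rw [hrdef]
    exact (one_le_inv₀ hμ0).mpr hμ1.le
  have hθr : θ * r < 1 := by
    rw [hrdef, hμdef]
    rw [mul_inv_lt_iff₀ (by positivity)]
    linarith
  have hθr0 : 0 ≤ θ * r := by positivity
  have hC0 : 0 < (1 - l) ^ (-α) := Real.rpow_pos_of_pos (by linarith) _
  set C : ℝ := (1 - l) ^ (-α) with hCdef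
  refine ⟨C / (1 - θ * r), div_pos hC0 (by linarith), ?_⟩
  intro f β A B ρ₀ R₀ hβ hβα hA hB hρR₀ hf0 ⟨M, hM⟩ hiter ρ R hρ₀ρ hρR hRR₀
  have hRρ : 0 < R - ρ := by linarith
  set S : ℝ := A * (R - ρ) ^ (-α) + B * (R - ρ) ^ (-β) with hSdef
  have hS0 : 0 ≤ S := by positivity
  -- the sequence of radii
  set seq : ℕ → ℝ := fun k => ρ + (1 - l ^ k) * (R - ρ) with hseq
  have hlk1 : ∀ k : ℕ, l ^ k ≤ 1 := fun k => pow_le_one₀ hl0.le hl1.le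
  have hlk0 : ∀ k : ℕ, 0 < l ^ k := fun k => pow_pos hl0 k
  have hseq_ge : ∀ k, ρ ≤ seq k := by
    intro k
    have : 0 ≤ (1 - l ^ k) * (R - ρ) := mul_nonneg (by linarith [hlk1 k]) hRρ.le
    simp only [hseq]; linarith
  have hseq_lt : ∀ k, seq k < R := by
    intro k
    have : (1 - l ^ k) * (R - ρ) < 1 * (R - ρ) :=
      mul_lt_mul_of_pos_right (by linarith [hlk0 k]) hRρ
    simp only [hseq]; linarith
  have hseq_mono : ∀ k, seq k < seq (k + 1) := by
    intro k
    have h1 : l ^ (k + 1) < l ^ k := by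
      rw [pow_succ]
      nlinarith [hlk0 k]
    have : (1 - l ^ k) * (R - ρ) < (1 - l ^ (k + 1)) * (R - ρ) :=
      mul_lt_mul_of_pos_right (by linarith) hRρ
    simp only [hseq]; linarith
  have hd : ∀ k, seq (k + 1) - seq k = l ^ k * ((1 - l) * (R - ρ)) := by
    intro k
    simp only [hseq]
    ring
  -- the value of (l^k)^(-α)
  have hlkα : ∀ k : ℕ, (l ^ k) ^ (-α) = r ^ k := by
    intro k
    rw [← Real.rpow_natCast l k, ← Real.rpow_mul hl0.le, mul_comm,
      Real.rpow_mul hl0.le, hlα, Real.rpow_natCast]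
  -- key one-step estimate
  have hr0 : (0:ℝ) ≤ r := le_trans zero_le_one hr1
  have h1l : (0:ℝ) ≤ 1 - l := by linarith
  have hstep : ∀ k, f (seq k) ≤ θ * f (seq (k + 1)) + r ^ k * (C * S) := by
    intro k
    have h1 := hiter (seq k) (seq (k + 1)) (le_trans hρ₀ρ (hseq_ge k)) (hseq_mono k)
      (le_trans (hseq_lt (k + 1)).le hRR₀)
    rw [hd k] at h1
    refine h1.trans ?_
    have hdpos : 0 < l ^ k * ((1 - l) * (R - ρ)) := mul_pos (hlk0 k) (mul_pos (by linarith) hRρ)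
    have e1 : (l ^ k * ((1 - l) * (R - ρ))) ^ (-α)
        = r ^ k * (C * (R - ρ) ^ (-α)) := by
      rw [Real.mul_rpow (hlk0 k).le (mul_nonneg h1l hRρ.le),
        Real.mul_rpow h1l hRρ.le, hlkα k, hCdef]
    have e2 : (l ^ k * ((1 - l) * (R - ρ))) ^ (-β)
        ≤ r ^ k * (C * (R - ρ) ^ (-β)) := by
      rw [Real.mul_rpow (hlk0 k).le (mul_nonneg h1l hRρ.le),
        Real.mul_rpow h1l hRρ.le]
      have i1 : (l ^ k) ^ (-β) ≤ (l ^ k) ^ (-α) :=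
        Real.rpow_le_rpow_of_exponent_ge (hlk0 k) (hlk1 k) (by linarith)
      have i2 : (1 - l) ^ (-β) ≤ (1 - l) ^ (-α) :=
        Real.rpow_le_rpow_of_exponent_ge (by linarith) (by linarith) (by linarith)
      rw [hlkα k] at i1
      calc (l ^ k) ^ (-β) * ((1 - l) ^ (-β) * (R - ρ) ^ (-β))
          ≤ r ^ k * ((1 - l) ^ (-α) * (R - ρ) ^ (-β)) := by
            apply mul_le_mul i1 _ (mul_nonneg (Real.rpow_nonneg h1l _)
              (Real.rpow_nonneg hRρ.le _)) (pow_nonneg hr0 k)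
            exact mul_le_mul_of_nonneg_right i2 (Real.rpow_nonneg hRρ.le _)
        _ = r ^ k * (C * (R - ρ) ^ (-β)) := by rw [hCdef]
    have : A * (l ^ k * ((1 - l) * (R - ρ))) ^ (-α)
        + B * (l ^ k * ((1 - l) * (R - ρ))) ^ (-β)
        ≤ r ^ k * (C * S) := by
      rw [e1, hSdef]
      have := mul_le_mul_of_nonneg_left e2 hB
      nlinarith [this]
    linarith
  -- the iterated estimate
  have hiterk : ∀ k : ℕ, f ρ ≤ θ ^ k * f (seq k)
      + (∑ j ∈ Finset.range k, (θ * r) ^ j) * (C * S) := by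
    intro k
    induction k with
    | zero =>
      have : seq 0 = ρ := by simp [hseq]
      simp [this]
    | succ k ih =>
      have h1 := hstep k
      have h2 : θ ^ k * f (seq k) ≤ θ ^ k * (θ * f (seq (k + 1)) + r ^ k * (C * S)) :=
        mul_le_mul_of_nonneg_left h1 (pow_nonneg hθ0 k)
      have e : θ ^ k * (θ * f (seq (k + 1)) + r ^ k * (C * S))
          = θ ^ (k + 1) * f (seq (k + 1)) + (θ * r) ^ k * (C * S) := by
        rw [mul_pow]; ring
      rw [e] at h2
      rw [geom_sum_succ']
      linarith
  -- bound on geometric sums and the boundedness term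
  have hsum : ∀ k : ℕ, (∑ j ∈ Finset.range k, (θ * r) ^ j) ≤ (1 - θ * r)⁻¹ := by
    intro k
    have hsummable : Summable (fun j : ℕ => (θ * r) ^ j) :=
      summable_geometric_of_lt_one hθr0 hθr
    have := Summable.sum_le_tsum (Finset.range k) (fun j _ => pow_nonneg hθr0 j) hsummable
    rwa [tsum_geometric_of_lt_one hθr0 hθr] at this
  have hM0 : 0 ≤ M := by
    have h1 := hf0 ρ ⟨hρ₀ρ, le_trans hρR.le hRR₀⟩
    have h2 := hM ρ ⟨hρ₀ρ, le_trans hρR.le hRR₀⟩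
    linarith
  have hbound : ∀ k : ℕ, f ρ ≤ θ ^ k * M + (1 - θ * r)⁻¹ * (C * S) := by
    intro k
    have h1 := hiterk k
    have h2 : f (seq k) ≤ M := hM (seq k)
      ⟨le_trans hρ₀ρ (hseq_ge k), le_trans (hseq_lt k).le hRR₀⟩
    have h3 : θ ^ k * f (seq k) ≤ θ ^ k * M :=
      mul_le_mul_of_nonneg_left h2 (pow_nonneg hθ0 k)
    have h4 : (∑ j ∈ Finset.range k, (θ * r) ^ j) * (C * S)
        ≤ (1 - θ * r)⁻¹ * (C * S) :=
      mul_le_mul_of_nonneg_right (hsum k) (mul_nonneg hC0.le hS0)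
    exact h1.trans (add_le_add h3 h4)
  -- pass to the limit k → ∞
  have hlim : Filter.Tendsto (fun k : ℕ => θ ^ k * M + (1 - θ * r)⁻¹ * (C * S))
      Filter.atTop (nhds (0 * M + (1 - θ * r)⁻¹ * (C * S))) := by
    exact ((tendsto_pow_atTop_nhds_zero_of_lt_one hθ0 hθ1).mul_const M).add_const _
  have hfinal : f ρ ≤ 0 * M + (1 - θ * r)⁻¹ * (C * S) :=
    ge_of_tendsto' hlim hbound
  calc f ρ ≤ 0 * M + (1 - θ * r)⁻¹ * (C * S) := hfinal
    _ = C / (1 - θ * r) * S := by ring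
end

section
/- Let u ∈ W^{1,2}_{loc}(ℝ³; ℝ³) satisfy ∫_{ℝ³} |∇u|² dx < ∞, and suppose u = ∇·Φ with Φ smooth satisfying ⨍_{B(r)} |Φ − Φ_{B(r)}|⁶ dx ≤ C r for all r > 1. Then r^{−1} ∫_{B(3r)\B(2r)} |u|³ dx → 0 as r → ∞. More precisely, ∫_{B(3r)\B(2r)} |u|³ dx ≤ c r (∫_{B(4r)\B(r)} |∇u|² dx)^{3/4} + c r^{1/2} for all r > 1. -/
open MeasureTheory Metric Set Filter

section Helpers

lemma pi_ibp (G : (Fin 3 → ℝ) → ℝ) (G' : (Fin 3 → ℝ) → (Fin 3 → ℝ) →L[ℝ] ℝ)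
    (hd : ∀ x, HasFDerivAt G (G' x) x) (hGc : Continuous G)
    (hsupp : HasCompactSupport G) (i : Fin 3)
    (hG'c : Continuous fun x => G' x (Pi.single i 1)) :
    ∫ x, G' x (Pi.single i 1) = 0 := by
  obtain ⟨R, hR0, hRs⟩ : ∃ R, 0 < R ∧ tsupport G ⊆ ball 0 R := by
    obtain ⟨r, hr, hsub⟩ := hsupp.isBounded.subset_closedBall_lt 0 0
    exact ⟨r + 1, by linarith, hsub.trans (closedBall_subset_ball (by linarith))⟩
  set a : Fin 3 → ℝ := fun _ => -R
  set b : Fin 3 → ℝ := fun _ => R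
  have hle : a ≤ b := fun k => by simp [a, b]; linarith
  set f : Fin 3 → (Fin 3 → ℝ) → ℝ := fun k x => if k = i then G x else 0
  set f' : Fin 3 → (Fin 3 → ℝ) → (Fin 3 → ℝ) →L[ℝ] ℝ := fun k x => if k = i then G' x else 0
  have hsum : ∀ x, ∑ k, f' k x (Pi.single k 1) = G' x (Pi.single i 1) := by
    intro x
    rw [Finset.sum_eq_single i]
    · simp [f']
    · intro k _ hk; simp [f', hk]
    · intro h; exact absurd (Finset.mem_univ i) h
  have key := MeasureTheory.integral_divergence_of_hasFDerivAt_off_countable'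
      (n := 2) a b hle f f' ∅ Set.countable_empty
      (fun k => by
        by_cases hk : k = i
        · subst hk; simpa [f] using hGc.continuousOn
        · simpa [f, hk] using continuousOn_const)
      (fun x _ k => by
        by_cases hk : k = i
        · subst hk; simpa [f, f'] using hd x
        · simpa [f, f', hk] using hasFDerivAt_const (0:ℝ) x)
      (by
        apply ContinuousOn.integrableOn_compact isCompact_Icc
        apply Continuous.continuousOn
        exact continuous_finset_sum _ (fun k _ => by
          by_cases hk : k = i
          · subst hk; simpa [f'] using hG'c
          · simpa [f', hk] using continuous_const))
  have hzero : ∀ x ∉ Icc a b, G' x (Pi.single i 1) = 0 := by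
    intro x hx
    have hxts : x ∉ tsupport G := by
      intro hmem
      apply hx
      have := hRs hmem
      rw [mem_ball, dist_zero_right] at this
      constructor <;> intro k
      · have := (abs_le.1 ((norm_le_pi_norm x k).trans this.le)).1
        simpa [a] using this
      · have := (abs_le.1 ((norm_le_pi_norm x k).trans this.le)).2
        simpa [b] using this
    have : fderiv ℝ G x = 0 := fderiv_of_notMem_tsupport (𝕜 := ℝ) hxts
    rw [← (hd x).fderiv, this]; rfl
  have hfull : ∫ x, G' x (Pi.single i 1) = ∫ x in Icc a b, G' x (Pi.single i 1) :=
    (setIntegral_eq_integral_of_forall_compl_eq_zero hzero).symm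
  rw [hfull]
  have : (∫ (x : Fin 3 → ℝ) in Set.Icc a b, ∑ k, (f' k x) (Pi.single k 1))
      = ∫ x in Icc a b, G' x (Pi.single i 1) := by
    apply setIntegral_congr_fun measurableSet_Icc
    intro x _; exact hsum x
  rw [← this, key]
  apply Finset.sum_eq_zero
  intro k _
  have hface : ∀ (c : ℝ), |c| = R → ∀ (y : Fin 2 → ℝ), f k (k.insertNth c y) = 0 := by
    intro c hc y
    set z : Fin 3 → ℝ := k.insertNth c y with hz
    have hzk : z k = c := Fin.insertNth_apply_same (α := fun _ => ℝ) k c y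
    by_cases hk : k = i
    · subst hk
      simp only [f, if_pos rfl]
      apply image_eq_zero_of_notMem_tsupport
      intro hmem
      have h1 := hRs hmem
      rw [mem_ball, dist_zero_right] at h1
      have h2 : ‖z k‖ ≤ ‖z‖ := norm_le_pi_norm z k
      rw [hzk, Real.norm_eq_abs, hc] at h2
      linarith
    · simp [f, hk]
  have h1 : (∫ (y : Fin 2 → ℝ) in Icc (a ∘ k.succAbove) (b ∘ k.succAbove),
      f k (k.insertNth (b k) y)) = 0 := by
    rw [setIntegral_congr_fun measurableSet_Icc (g := fun _ => (0:ℝ))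
      (fun y _ => hface (b k) (by simp [b, abs_of_pos hR0]) y)]
    simp
  have h2 : (∫ (y : Fin 2 → ℝ) in Icc (a ∘ k.succAbove) (b ∘ k.succAbove),
      f k (k.insertNth (a k) y)) = 0 := by
    rw [setIntegral_congr_fun measurableSet_Icc (g := fun _ => (0:ℝ))
      (fun y _ => hface (a k) (by simp [a, abs_of_pos hR0]) y)]
    simp
  rw [h1, h2, sub_zero]

lemma e3_ibp (F : E3 → ℝ) (F' : E3 → E3 →L[ℝ] ℝ)
    (hd : ∀ x, HasFDerivAt F (F' x) x) (hFc : Continuous F)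
    (hsupp : HasCompactSupport F) (i : Fin 3)
    (hF'c : Continuous fun x => F' x (EuclideanSpace.single i 1)) :
    ∫ x, F' x (EuclideanSpace.single i 1) = 0 := by
  set L := EuclideanSpace.equiv (Fin 3) ℝ with hL
  set G : (Fin 3 → ℝ) → ℝ := fun y => F (L.symm y) with hG
  set G' : (Fin 3 → ℝ) → (Fin 3 → ℝ) →L[ℝ] ℝ :=
    fun y => (F' (L.symm y)).comp (L.symm : (Fin 3 → ℝ) →L[ℝ] E3) with hG'
  have hsingle : (L.symm : (Fin 3 → ℝ) → E3) (Pi.single i 1) = EuclideanSpace.single i 1 := rfl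
  have hGd : ∀ y, HasFDerivAt G (G' y) y := fun y =>
    ((hd (L.symm y)).comp y (L.symm.hasFDerivAt))
  have hGc : Continuous G := hFc.comp L.symm.continuous
  have hGsupp : HasCompactSupport G :=
    hsupp.comp_homeomorph (L.symm.toHomeomorph)
  have hG'c : Continuous fun y => G' y (Pi.single i 1) := by
    have : (fun y => G' y (Pi.single i 1))
        = (fun x => F' x (EuclideanSpace.single i 1)) ∘ (L.symm : (Fin 3 → ℝ) → E3) := by
      funext y; simp [hG', hsingle]
    rw [this]; exact hF'c.comp L.symm.continuous
  have hzero := pi_ibp G G' hGd hGc hGsupp i hG'c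
  have me := EuclideanSpace.volume_preserving_symm_measurableEquiv_toLp (Fin 3)
  have htrans : ∫ x : E3, G' ((MeasurableEquiv.toLp 2 (Fin 3 → ℝ)).symm x) (Pi.single i 1)
      = ∫ y : Fin 3 → ℝ, G' y (Pi.single i 1) := by
    simpa using me.integral_comp ((MeasurableEquiv.toLp 2 (Fin 3 → ℝ)).symm).measurableEmbedding
      (fun y => G' y (Pi.single i 1))
  have hagree : ∀ x : E3, G' ((MeasurableEquiv.toLp 2 (Fin 3 → ℝ)).symm x) (Pi.single i 1)
      = F' x (EuclideanSpace.single i 1) := fun x => rfl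
  calc ∫ x : E3, F' x (EuclideanSpace.single i 1)
      = ∫ x : E3, G' ((MeasurableEquiv.toLp 2 (Fin 3 → ℝ)).symm x) (Pi.single i 1) := by
        simp only [hagree]
    _ = ∫ y : Fin 3 → ℝ, G' y (Pi.single i 1) := htrans
    _ = 0 := hzero

lemma q_hasDerivAt (t : ℝ) : HasDerivAt (fun s : ℝ => s * |s|) (2 * |t|) t := by
  rcases lt_trichotomy t 0 with ht | ht | ht
  · have hev : (fun s : ℝ => -(s * s)) =ᶠ[nhds t] (fun s : ℝ => s * |s|) := by
      filter_upwards [Iio_mem_nhds ht] with s hs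
      rw [abs_of_neg hs]; ring
    have : HasDerivAt (fun s : ℝ => -(s * s)) (2 * |t|) t := by
      have h1 : HasDerivAt (fun s : ℝ => s * s) (2 * t) t := by
        simpa [sq] using hasDerivAt_pow 2 t
      have h2 := h1.neg
      exact h2.congr_deriv (by rw [abs_of_neg ht]; ring)
    exact this.congr_of_eventuallyEq hev.symm
  · subst ht
    rw [hasDerivAt_iff_isLittleO]
    simp only [abs_zero, mul_zero, zero_mul, sub_zero, smul_zero]
    rw [Asymptotics.isLittleO_iff]
    intro c hc
    filter_upwards [Metric.ball_mem_nhds (0:ℝ) hc] with s hs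
    rw [mem_ball, dist_zero_right, Real.norm_eq_abs] at hs
    rw [Real.norm_eq_abs, abs_mul, abs_abs, Real.norm_eq_abs]
    exact mul_le_mul_of_nonneg_right hs.le (abs_nonneg s)
  · have hev : (fun s : ℝ => s * s) =ᶠ[nhds t] (fun s : ℝ => s * |s|) := by
      filter_upwards [Ioi_mem_nhds ht] with s hs
      rw [abs_of_pos hs]
    have : HasDerivAt (fun s : ℝ => s * s) (2 * |t|) t := by
      have h1 : HasDerivAt (fun s : ℝ => s * s) (2 * t) t := by
        simpa [sq] using hasDerivAt_pow 2 t
      convert h1 using 2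
      rw [abs_of_pos ht]
    exact this.congr_of_eventuallyEq hev.symm

lemma memLp_restrict {f : E3 → ℝ} (hf : Continuous f) {R : ℝ} {s : Set E3}
    (hsm : MeasurableSet s) (hs : s ⊆ closedBall 0 R) (p : ENNReal) :
    MemLp f p (volume.restrict s) := by
  haveI : IsFiniteMeasure (volume.restrict s) := by
    constructor
    rw [Measure.restrict_apply_univ]
    exact lt_of_le_of_lt (measure_mono hs) measure_closedBall_lt_top
  obtain ⟨M, hM⟩ := (isCompact_closedBall (0:E3) R).exists_bound_of_continuousOn
    hf.continuousOn
  apply MemLp.of_bound hf.aestronglyMeasurable M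
  refine (ae_restrict_iff' hsm).2 (ae_of_all _ fun x hx => hM x (hs hx))

lemma integrableOn_of_cont {f : E3 → ℝ} (hf : Continuous f) {R : ℝ} {s : Set E3}
    (hsm : MeasurableSet s) (hs : s ⊆ closedBall 0 R) : IntegrableOn f s :=
  memLp_one_iff_integrable.1 (memLp_restrict hf hsm hs 1)

lemma absorb {I A B : ℝ} (hI : 0 ≤ I) (hA : 0 ≤ A) (hB : 0 ≤ B)
    (h : I ≤ A * I ^ ((2:ℝ)/3) + B * I ^ ((1:ℝ)/3)) :
    I ≤ 4 * A ^ (3:ℕ) + 4 * B ^ ((3:ℝ)/2) := by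
  set t := I ^ ((1:ℝ)/3) with htdef
  have ht0 : 0 ≤ t := Real.rpow_nonneg hI _
  have hI3 : I = t ^ (3:ℕ) := by
    rw [htdef, ← Real.rpow_natCast (I ^ ((1:ℝ)/3)) 3, ← Real.rpow_mul hI]
    norm_num
  have hI2 : I ^ ((2:ℝ)/3) = t ^ (2:ℕ) := by
    rw [htdef, ← Real.rpow_natCast (I ^ ((1:ℝ)/3)) 2, ← Real.rpow_mul hI]
    norm_num
  set s := Real.sqrt B with hsdef
  have hs0 : 0 ≤ s := Real.sqrt_nonneg B
  have hs2 : s ^ (2:ℕ) = B := Real.sq_sqrt hB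
  have hkey : t ^ (3:ℕ) ≤ A * t ^ (2:ℕ) + B * t := by
    rw [← hI3, ← hI2]; exact h
  have hts : t ≤ A + s := by
    by_contra hcon
    push_neg at hcon
    have htpos : 0 < t := lt_of_le_of_lt (by positivity) hcon
    have hst : s ≤ t := le_trans (le_add_of_nonneg_left hA) hcon.le
    nlinarith [mul_lt_mul_of_pos_right hcon (mul_pos htpos htpos),
      mul_nonneg (mul_nonneg hs0 ht0) (sub_nonneg.2 hst)]
  have hB32 : B ^ ((3:ℝ)/2) = s ^ (3:ℕ) := by
    rw [hsdef, Real.sqrt_eq_rpow, ← Real.rpow_natCast (B ^ ((1:ℝ)/2)) 3, ← Real.rpow_mul hB]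
    norm_num
  rw [hI3, hB32]
  have h1 : t ^ (3:ℕ) ≤ (A + s) ^ (3:ℕ) := pow_le_pow_left₀ ht0 hts 3
  nlinarith [mul_nonneg (add_nonneg hA hs0) (sq_nonneg (A - s)), h1]

lemma tail_tendsto {g : E3 → ℝ} (hg : Integrable g) (hg0 : ∀ x, 0 ≤ g x) :
    Tendsto (fun r : ℝ => ∫ x in (ball (0:E3) r)ᶜ, g x) atTop (nhds 0) := by
  have htot : ∀ r : ℝ, ∫ x in (ball (0:E3) r)ᶜ, g x
      = (∫ x, g x) - ∫ x in ball (0:E3) r, g x := by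
    intro r
    have := integral_add_compl (measurableSet_ball (x := (0:E3)) (ε := r)) hg
    linarith
  have hmono : Tendsto (fun n : ℕ => ∫ x in ball (0:E3) n, g x) atTop
      (nhds (∫ x in ⋃ n : ℕ, ball (0:E3) n, g x)) := by
    apply tendsto_setIntegral_of_monotone (fun n => measurableSet_ball)
    · intro n m hnm
      exact ball_subset_ball (by exact_mod_cast hnm)
    · exact hg.integrableOn
  have hunion : (⋃ n : ℕ, ball (0:E3) n) = univ := by
    ext x
    simp only [mem_iUnion, mem_ball, dist_zero_right, mem_univ, iff_true]
    obtain ⟨n, hn⟩ := exists_nat_gt ‖x‖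
    exact ⟨n, hn⟩
  rw [hunion] at hmono
  rw [setIntegral_univ] at hmono
  have hupper : Tendsto (fun r : ℝ => (∫ x, g x) - ∫ x in ball (0:E3) (⌊r⌋₊ : ℕ), g x)
      atTop (nhds 0) := by
    have := hmono.comp tendsto_nat_floor_atTop (α := ℝ)
    have h2 := (tendsto_const_nhds (x := ∫ x, g x) (f := atTop (α := ℝ))).sub this
    simpa using h2
  apply tendsto_of_tendsto_of_tendsto_of_le_of_le' tendsto_const_nhds hupper
  · filter_upwards with r
    exact setIntegral_nonneg (measurableSet_ball.compl) (fun x _ => hg0 x)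
  · filter_upwards [eventually_ge_atTop (0:ℝ)] with r hr
    rw [htot r]
    have hsub : ball (0:E3) (⌊r⌋₊ : ℕ) ⊆ ball (0:E3) r :=
      ball_subset_ball (Nat.floor_le hr)
    have : ∫ x in ball (0:E3) (⌊r⌋₊ : ℕ), g x ≤ ∫ x in ball (0:E3) r, g x := by
      apply setIntegral_mono_set hg.integrableOn (ae_of_all _ hg0)
      exact HasSubset.Subset.eventuallyLE hsub
    linarith

lemma cutoff_exists : ∃ (η : E3 → ℝ) (K : ℝ), 0 < K ∧ ContDiff ℝ ((⊤:ℕ∞) : WithTop ℕ∞) η ∧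
    (∀ x, 0 ≤ η x) ∧ (∀ x, η x ≤ 1) ∧
    (∀ x : E3, 2 ≤ ‖x‖ → ‖x‖ ≤ 3 → η x = 1) ∧
    (∀ x : E3, ‖x‖ ≤ 1 → η x = 0) ∧ (∀ x : E3, 4 ≤ ‖x‖ → η x = 0) ∧
    (∀ x, ‖fderiv ℝ η x‖ ≤ K) := by
  set b34 : ContDiffBump (0:E3) := ⟨3, 4, by norm_num, by norm_num⟩ with hb34
  set b12 : ContDiffBump (0:E3) := ⟨1, 2, by norm_num, by norm_num⟩ with hb12
  set η : E3 → ℝ := fun x => b34 x * (1 - b12 x) with hη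
  have hcd : ContDiff ℝ ((⊤:ℕ∞) : WithTop ℕ∞) η :=
    ContDiff.mul b34.contDiff (contDiff_const.sub b12.contDiff)
  have h0 : ∀ x, 0 ≤ η x := fun x => mul_nonneg b34.nonneg (by linarith [b12.le_one (x := x)])
  have h1 : ∀ x, η x ≤ 1 := fun x => by
    show b34 x * (1 - b12 x) ≤ 1
    have := b34.le_one (x := x)
    have := b34.nonneg (x := x)
    have := b12.nonneg (x := x)
    have := b12.le_one (x := x)
    nlinarith
  have hone : ∀ x : E3, 2 ≤ ‖x‖ → ‖x‖ ≤ 3 → η x = 1 := by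
    intro x h2 h3
    have e1 : b34 x = 1 := b34.one_of_mem_closedBall (by
      simpa [mem_closedBall, dist_zero_right] using h3)
    have e2 : b12 x = 0 := b12.zero_of_le_dist (by
      simpa [dist_zero_right] using h2)
    simp [hη, e1, e2]
  have hz1 : ∀ x : E3, ‖x‖ ≤ 1 → η x = 0 := by
    intro x hx
    have e2 : b12 x = 1 := b12.one_of_mem_closedBall (by
      simpa [mem_closedBall, dist_zero_right] using hx)
    simp [hη, e2]
  have hz4 : ∀ x : E3, 4 ≤ ‖x‖ → η x = 0 := by
    intro x hx
    have e1 : b34 x = 0 := b34.zero_of_le_dist (by simpa [dist_zero_right] using hx)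
    simp [hη, e1]
  have hts : tsupport η ⊆ closedBall (0:E3) 4 := by
    apply closure_minimal _ isClosed_closedBall
    intro x hx
    rw [Function.mem_support] at hx
    by_contra hmem
    rw [mem_closedBall, dist_zero_right, not_le] at hmem
    exact hx (hz4 x hmem.le)
  obtain ⟨M, hM⟩ := (isCompact_closedBall (0:E3) 4).exists_bound_of_continuousOn
    ((hcd.continuous_fderiv (by simp)).continuousOn)
  refine ⟨η, max M 1, lt_of_lt_of_le one_pos (le_max_right _ _), hcd, h0, h1, hone, hz1, hz4, ?_⟩
  intro x
  by_cases hx : x ∈ closedBall (0:E3) 4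
  · exact le_trans (hM x hx) (le_max_left _ _)
  · have : fderiv ℝ η x = 0 := fderiv_of_notMem_tsupport (𝕜 := ℝ)
      (fun hmem => hx (hts hmem))
    rw [this]
    simp [le_max_iff]

lemma assemble {K c1 c2 r Iq Dq Pw3 Pw6 : ℝ} (hK : 0 < K) (hc1 : 0 ≤ c1) (hc2 : 0 ≤ c2)
    (hr : 1 < r) (hIq : 0 ≤ Iq) (hDq : 0 ≤ Dq) (hPw3 : 0 ≤ Pw3) (hPw6 : 0 ≤ Pw6)
    (h3 : Pw3 ≤ c2 * r ^ ((7:ℝ)/2)) (h6 : Pw6 ≤ c1 * r ^ (4:ℕ))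
    (hmain : Iq ≤ 9*(K/r) * (Iq ^ ((2:ℝ)/3) * Pw3 ^ ((1:ℝ)/3))
      + 6 * (Iq ^ ((1:ℝ)/3) * (Dq ^ ((1:ℝ)/2) * Pw6 ^ ((1:ℝ)/6)))) :
    Iq ≤ (4*(729*K^(3:ℕ)*c2)) * r ^ ((1:ℝ)/2)
      + (4*(6*c1^((1:ℝ)/6))^((3:ℝ)/2)) * (r * Dq ^ ((3:ℝ)/4)) := by
  have hr0 : (0:ℝ) < r := lt_trans one_pos hr
  set A : ℝ := 9 * K * c2 ^ ((1:ℝ)/3) * r ^ ((1:ℝ)/6) with hA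
  set B : ℝ := 6 * c1 ^ ((1:ℝ)/6) * r ^ ((2:ℝ)/3) * Dq ^ ((1:ℝ)/2) with hB
  have hA0 : 0 ≤ A := by positivity
  have hB0 : 0 ≤ B := by positivity
  have hPw3' : Pw3 ^ ((1:ℝ)/3) ≤ c2 ^ ((1:ℝ)/3) * r ^ ((7:ℝ)/6) := by
    calc Pw3 ^ ((1:ℝ)/3) ≤ (c2 * r ^ ((7:ℝ)/2)) ^ ((1:ℝ)/3) :=
          Real.rpow_le_rpow hPw3 h3 (by norm_num)
      _ = c2 ^ ((1:ℝ)/3) * r ^ ((7:ℝ)/6) := by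
          rw [Real.mul_rpow hc2 (Real.rpow_nonneg hr0.le _), ← Real.rpow_mul hr0.le]
          norm_num
  have hPw6' : Pw6 ^ ((1:ℝ)/6) ≤ c1 ^ ((1:ℝ)/6) * r ^ ((2:ℝ)/3) := by
    calc Pw6 ^ ((1:ℝ)/6) ≤ (c1 * r ^ (4:ℕ)) ^ ((1:ℝ)/6) :=
          Real.rpow_le_rpow hPw6 h6 (by norm_num)
      _ = c1 ^ ((1:ℝ)/6) * r ^ ((2:ℝ)/3) := by
          rw [Real.mul_rpow hc1 (by positivity), ← Real.rpow_natCast r 4,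
            ← Real.rpow_mul hr0.le]
          norm_num
  have hstep : Iq ≤ A * Iq ^ ((2:ℝ)/3) + B * Iq ^ ((1:ℝ)/3) := by
    have h1 : 9*(K/r) * (Iq ^ ((2:ℝ)/3) * Pw3 ^ ((1:ℝ)/3)) ≤ A * Iq ^ ((2:ℝ)/3) := by
      have hb : Iq ^ ((2:ℝ)/3) * Pw3 ^ ((1:ℝ)/3)
          ≤ Iq ^ ((2:ℝ)/3) * (c2 ^ ((1:ℝ)/3) * r ^ ((7:ℝ)/6)) :=
        mul_le_mul_of_nonneg_left hPw3' (Real.rpow_nonneg hIq _)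
      have h9 : (0:ℝ) ≤ 9*(K/r) := by positivity
      calc 9*(K/r) * (Iq ^ ((2:ℝ)/3) * Pw3 ^ ((1:ℝ)/3))
          ≤ 9*(K/r) * (Iq ^ ((2:ℝ)/3) * (c2 ^ ((1:ℝ)/3) * r ^ ((7:ℝ)/6))) :=
            mul_le_mul_of_nonneg_left hb h9
        _ = A * Iq ^ ((2:ℝ)/3) := by
            have hr76 : r ^ ((7:ℝ)/6) = r ^ ((1:ℝ)/6) * r := by
              have h := Real.rpow_add hr0 ((1:ℝ)/6) 1
              rw [Real.rpow_one] at h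
              norm_num at h
              exact h
            rw [hA, hr76]
            field_simp
    have h2 : 6 * (Iq ^ ((1:ℝ)/3) * (Dq ^ ((1:ℝ)/2) * Pw6 ^ ((1:ℝ)/6)))
        ≤ B * Iq ^ ((1:ℝ)/3) := by
      have hb : Dq ^ ((1:ℝ)/2) * Pw6 ^ ((1:ℝ)/6)
          ≤ Dq ^ ((1:ℝ)/2) * (c1 ^ ((1:ℝ)/6) * r ^ ((2:ℝ)/3)) :=
        mul_le_mul_of_nonneg_left hPw6' (Real.rpow_nonneg hDq _)
      calc 6 * (Iq ^ ((1:ℝ)/3) * (Dq ^ ((1:ℝ)/2) * Pw6 ^ ((1:ℝ)/6)))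
          ≤ 6 * (Iq ^ ((1:ℝ)/3) * (Dq ^ ((1:ℝ)/2) * (c1 ^ ((1:ℝ)/6) * r ^ ((2:ℝ)/3)))) := by
            apply mul_le_mul_of_nonneg_left _ (by norm_num)
            exact mul_le_mul_of_nonneg_left hb (Real.rpow_nonneg hIq _)
        _ = B * Iq ^ ((1:ℝ)/3) := by rw [hB]; ring
    linarith
  have habs := absorb hIq hA0 hB0 hstep
  have hc23 : (c2 ^ ((1:ℝ)/3))^(3:ℕ) = c2 := by
    rw [← Real.rpow_natCast (c2 ^ ((1:ℝ)/3)) 3, ← Real.rpow_mul hc2]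
    norm_num
  have hr163 : (r ^ ((1:ℝ)/6))^(3:ℕ) = r ^ ((1:ℝ)/2) := by
    rw [← Real.rpow_natCast (r ^ ((1:ℝ)/6)) 3, ← Real.rpow_mul hr0.le]
    norm_num
  have hA3 : A ^ (3:ℕ) = 729*K^(3:ℕ)*c2 * r ^ ((1:ℝ)/2) := by
    rw [hA, mul_pow, mul_pow, hc23, hr163]
    ring
  have hB32 : B ^ ((3:ℝ)/2) = (6*c1^((1:ℝ)/6))^((3:ℝ)/2) * (r * Dq ^ ((3:ℝ)/4)) := by
    rw [hB]
    have e1 : 6 * c1 ^ ((1:ℝ)/6) * r ^ ((2:ℝ)/3) * Dq ^ ((1:ℝ)/2)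
        = (6 * c1 ^ ((1:ℝ)/6)) * (r ^ ((2:ℝ)/3) * Dq ^ ((1:ℝ)/2)) := by ring
    have h1 : (r ^ ((2:ℝ)/3) * Dq ^ ((1:ℝ)/2)) ^ ((3:ℝ)/2) = r * Dq ^ ((3:ℝ)/4) := by
      rw [Real.mul_rpow (by positivity) (by positivity), ← Real.rpow_mul hr0.le,
        ← Real.rpow_mul hDq]
      norm_num [Real.rpow_one]
    rw [e1, Real.mul_rpow (by positivity) (by positivity), h1]
  rw [hA3] at habs
  rw [hB32] at habs
  calc Iq ≤ 4 * (729*K^(3:ℕ)*c2 * r ^ ((1:ℝ)/2))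
        + 4 * ((6*c1^((1:ℝ)/6))^((3:ℝ)/2) * (r * Dq ^ ((3:ℝ)/4))) := habs
    _ = (4*(729*K^(3:ℕ)*c2)) * r ^ ((1:ℝ)/2)
        + (4*(6*c1^((1:ℝ)/6))^((3:ℝ)/2)) * (r * Dq ^ ((3:ℝ)/4)) := by ring

lemma norm_cube_le_sum (v : Fin 3 → ℝ) : ‖v‖^3 ≤ ∑ j, |v j|^3 := by
  obtain ⟨j, _, hj⟩ := Finset.exists_mem_eq_sup (Finset.univ : Finset (Fin 3))
    ⟨0, Finset.mem_univ 0⟩ (fun b => (‖v b‖₊ : NNReal))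
  have hnorm : ‖v‖ = |v j| := by
    rw [Pi.norm_def, hj]
    simp [Real.norm_eq_abs]
  rw [hnorm]
  exact Finset.single_le_sum (f := fun k => |v k|^3) (fun k _ => by positivity)
    (Finset.mem_univ j)

lemma q_mul_self (t : ℝ) : t * |t| * t = |t|^3 := by
  rcases abs_cases t with ⟨h, _⟩ | ⟨h, _⟩ <;> rw [h] <;> ring

lemma comp_le_norm (v : Fin 3 → Fin 3 → ℝ) (i j : Fin 3) : |v i j| ≤ ‖v‖ := by
  have h1 : ‖v i j‖ ≤ ‖v i‖ := norm_le_pi_norm (v i) j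
  have h2 : ‖v i‖ ≤ ‖v‖ := norm_le_pi_norm v i
  rw [Real.norm_eq_abs] at h1
  linarith

lemma pow_rpow_collapse {a : ℝ} (ha : 0 ≤ a) {m k : ℕ} {s : ℝ} (h : (m:ℝ) * s = k) :
    (a^m)^s = a^k := by
  rw [← Real.rpow_natCast a m, ← Real.rpow_mul ha, h, Real.rpow_natCast]

lemma rpow_rpow_collapse {a : ℝ} (ha : 0 ≤ a) {s t : ℝ} {k : ℕ} (h : s*t = k) :
    (a^s)^t = a^k := by
  rw [← Real.rpow_mul ha, h, Real.rpow_natCast]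

end Helpers

set_option maxHeartbeats 2000000 in
/-- If `u = ∇·Φ` with `Φ` smooth satisfying `⨍_{B(r)} |Φ-Φ_{B(r)}|⁶ ≤ C r` for all `r > 1`,
and `∫_{ℝ³} |∇u|² < ∞`, then `∫_{B(3r)\B(2r)} |u|³ ≤ c r (∫_{B(4r)\B(r)} |∇u|²)^{3/4}
+ c r^{1/2}` for all `r > 1`, and in particular
`r⁻¹ ∫_{B(3r)\B(2r)} |u|³ → 0` as `r → ∞`. -/
theorem stmt_15 (C : ℝ) (hC : 0 < C)
    (u : E3 → Fin 3 → ℝ) (Φ : E3 → Fin 3 → Fin 3 → ℝ)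
    (hu : ContDiff ℝ (⊤ : ℕ∞) u) (hΦ : ContDiff ℝ (⊤ : ℕ∞) Φ)
    (hdiv : ∀ x j, u x j = matDiv Φ x j)
    (hL2 : Integrable (fun x => ‖fderiv ℝ u x‖ ^ 2))
    (hosc : ∀ r : ℝ, 1 < r →
      (⨍ x in Metric.ball (0 : E3) r,
        ‖(fun (i j : Fin 3) => Φ x i j - ⨍ y in Metric.ball (0 : E3) r, Φ y i j)‖ ^ 6)
        ≤ C * r) :
    (∃ c : ℝ, 0 < c ∧ ∀ r : ℝ, 1 < r →
      (∫ x in Metric.ball (0 : E3) (3 * r) \ Metric.ball (0 : E3) (2 * r), ‖u x‖ ^ 3)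
        ≤ c * r * (∫ x in Metric.ball (0 : E3) (4 * r) \ Metric.ball (0 : E3) r,
            ‖fderiv ℝ u x‖ ^ 2) ^ ((3 : ℝ) / 4)
          + c * r ^ ((1 : ℝ) / 2)) ∧
    Filter.Tendsto (fun r : ℝ =>
        r⁻¹ * ∫ x in Metric.ball (0 : E3) (3 * r) \ Metric.ball (0 : E3) (2 * r), ‖u x‖ ^ 3)
      Filter.atTop (nhds 0) := by
  obtain ⟨η, K, hK, hηcd, hη0, hη1, hηone, hηz1, hηz4, hηK⟩ := cutoff_exists
  have hV0 : 0 < (volume (ball (0:E3) 1)).toReal :=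
    ENNReal.toReal_pos (measure_ball_pos volume 0 one_pos).ne' measure_ball_lt_top.ne
  set V : ℝ := (volume (ball (0:E3) 1)).toReal with hVdef
  set c1 : ℝ := 256 * C * V with hc1def
  have hc1 : 0 ≤ c1 := by positivity
  set c2 : ℝ := c1 ^ ((1:ℝ)/2) * (64*V) ^ ((1:ℝ)/2) with hc2def
  have hc2 : 0 ≤ c2 := by positivity
  set a1 : ℝ := 4*(729*K^(3:ℕ)*c2) with ha1def
  set b1 : ℝ := 4*(6*c1^((1:ℝ)/6))^((3:ℝ)/2) with hb1def
  have ha10 : 0 ≤ a1 := by positivity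
  have hb10 : 0 ≤ b1 := by positivity
  set c : ℝ := 3*a1 + 3*b1 + 1 with hcdef
  have hc0 : 0 < c := by positivity
  have main : ∀ r : ℝ, 1 < r →
      (∫ x in ball (0:E3) (3*r) \ ball (0:E3) (2*r), ‖u x‖^3)
        ≤ c * r * (∫ x in ball (0:E3) (4*r) \ ball (0:E3) r, ‖fderiv ℝ u x‖^2) ^ ((3:ℝ)/4)
          + c * r ^ ((1:ℝ)/2) := by
    intro r hr
    have hr0 : (0:ℝ) < r := lt_trans one_pos hr
    set T : Set E3 := ball (0:E3) (4*r) \ ball (0:E3) r with hTdef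
    have hTm : MeasurableSet T := measurableSet_ball.diff measurableSet_ball
    have hTsub : T ⊆ closedBall (0:E3) (4*r) := fun x hx => ball_subset_closedBall hx.1
    -- the rescaled cutoff
    set ψ : E3 → ℝ := fun x => η (r⁻¹ • x) with hψdef
    have hsmul : ∀ x : E3, ‖r⁻¹ • x‖ = r⁻¹ * ‖x‖ := fun x => by
      rw [norm_smul, Real.norm_eq_abs, abs_of_pos (inv_pos.2 hr0)]
    have hψcd : ContDiff ℝ ((⊤:ℕ∞) : WithTop ℕ∞) ψ :=
      hηcd.comp (contDiff_const_smul r⁻¹)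
    have hψcont : Continuous ψ := hψcd.continuous
    have hψ0 : ∀ x, 0 ≤ ψ x := fun x => hη0 _
    have hψ1 : ∀ x, ψ x ≤ 1 := fun x => hη1 _
    have hψone : ∀ x ∈ ball (0:E3) (3*r) \ ball (0:E3) (2*r), ψ x = 1 := by
      intro x hx
      obtain ⟨hx1, hx2⟩ := hx
      rw [mem_ball, dist_zero_right] at hx1
      rw [mem_ball, dist_zero_right, not_lt] at hx2
      apply hηone
      · rw [hsmul, inv_mul_eq_div, le_div_iff₀ hr0]; linarith
      · rw [hsmul, inv_mul_eq_div, div_le_iff₀ hr0]; linarith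
    have hψzero : ∀ x, x ∉ T → ψ x = 0 := by
      intro x hx
      rw [hTdef, mem_diff, not_and_or, not_not] at hx
      rcases hx with hx | hx
      · rw [mem_ball, dist_zero_right, not_lt] at hx
        apply hηz4
        rw [hsmul, inv_mul_eq_div, le_div_iff₀ hr0]; linarith
      · rw [mem_ball, dist_zero_right] at hx
        apply hηz1
        rw [hsmul, inv_mul_eq_div, div_le_iff₀ hr0]; linarith
    have hψsupp : HasCompactSupport ψ :=
      HasCompactSupport.intro (isCompact_closedBall (0:E3) (4*r))
        (fun x hx => hψzero x (fun hmem => hx (hTsub hmem)))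
    set Dψ : E3 → E3 →L[ℝ] ℝ := fun x => r⁻¹ • fderiv ℝ η (r⁻¹ • x) with hDψdef
    have hψd : ∀ x, HasFDerivAt ψ (Dψ x) x := by
      intro x
      have hL : HasFDerivAt (fun y : E3 => r⁻¹ • y) (r⁻¹ • ContinuousLinearMap.id ℝ E3) x :=
        (hasFDerivAt_id x).const_smul r⁻¹
      have hηd : HasFDerivAt η (fderiv ℝ η (r⁻¹ • x)) (r⁻¹ • x) :=
        (hηcd.differentiable (by simp) _).hasFDerivAt
      have hcomp := hηd.comp x hL
      have heq : (fderiv ℝ η (r⁻¹ • x)).comp (r⁻¹ • ContinuousLinearMap.id ℝ E3) = Dψ x := by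
        ext v
        simp [hDψdef, _root_.map_smul]
      rw [heq] at hcomp
      exact hcomp
    have hψdapp : ∀ x (i : Fin 3), |Dψ x (EuclideanSpace.single i 1)| ≤ K / r := by
      intro x i
      have h1 : |Dψ x (EuclideanSpace.single i 1)|
          = r⁻¹ * |fderiv ℝ η (r⁻¹ • x) (EuclideanSpace.single i 1)| := by
        simp [hDψdef, abs_mul, abs_of_pos (inv_pos.2 hr0)]
      rw [h1]
      have h2 : |fderiv ℝ η (r⁻¹ • x) (EuclideanSpace.single i 1)| ≤ K := by
        calc |fderiv ℝ η (r⁻¹ • x) (EuclideanSpace.single i 1)|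
            ≤ ‖fderiv ℝ η (r⁻¹ • x)‖ * ‖EuclideanSpace.single i (1:ℝ)‖ := by
              rw [← Real.norm_eq_abs]
              exact ContinuousLinearMap.le_opNorm _ _
          _ = ‖fderiv ℝ η (r⁻¹ • x)‖ := by rw [EuclideanSpace.norm_single]; simp
          _ ≤ K := hηK _
      calc r⁻¹ * |fderiv ℝ η (r⁻¹ • x) (EuclideanSpace.single i 1)| ≤ r⁻¹ * K :=
            mul_le_mul_of_nonneg_left h2 (inv_nonneg.2 hr0.le)
        _ = K / r := by rw [inv_mul_eq_div]
    have hψdcont : ∀ i : Fin 3, Continuous fun x => Dψ x (EuclideanSpace.single i 1) := by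
      intro i
      apply Continuous.clm_apply _ continuous_const
      exact (continuous_const : Continuous fun _ : E3 => r⁻¹).smul
        ((hηcd.continuous_fderiv (by simp)).comp
          (continuous_const_smul r⁻¹))
    -- the mean
    set m : Fin 3 → Fin 3 → ℝ := fun i j => ⨍ y in ball (0:E3) (4*r), Φ y i j with hmdef
    have hΦijc : ∀ i j : Fin 3, Continuous fun x => Φ x i j := fun i j =>
      (continuous_apply j).comp ((continuous_apply i).comp hΦ.continuous)
    have hΦijcd : ∀ i j : Fin 3, ContDiff ℝ (⊤ : ℕ∞) (fun x => Φ x i j) := fun i j =>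
      contDiff_pi.1 (contDiff_pi.1 hΦ i) j
    -- volume computations
    have hvol4 : (volume (ball (0:E3) (4*r))).toReal = 64 * r^(3:ℕ) * V := by
      rw [Measure.addHaar_ball volume (0:E3) (by positivity : (0:ℝ) ≤ 4*r),
        finrank_euclideanSpace_fin, ENNReal.toReal_mul,
        ENNReal.toReal_ofReal (by positivity), ← hVdef]
      ring
    have hvolT : (volume T).toReal ≤ 64 * r^(3:ℕ) * V := by
      rw [← hvol4]
      exact ENNReal.toReal_mono measure_ball_lt_top.ne (measure_mono diff_subset)
    -- oscillation bound
    have hmatc : Continuous fun x => ‖(fun i j => Φ x i j - m i j)‖^6 := by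
      have h1 : Continuous fun x => (fun i j => Φ x i j - m i j) := by
        apply continuous_pi; intro i; apply continuous_pi; intro j
        exact (hΦijc i j).sub continuous_const
      exact (h1.norm).pow 6
    have hI6 : ∫ x in ball (0:E3) (4*r), ‖(fun i j => Φ x i j - m i j)‖^6
        ≤ c1 * r^(4:ℕ) := by
      have hosc4 := hosc (4*r) (by linarith)
      rw [setAverage_eq, smul_eq_mul] at hosc4
      have hvpos : 0 < (volume (ball (0:E3) (4*r))).toReal := by
        rw [hvol4]; positivity
      have h2 : (∫ x in ball (0:E3) (4*r), ‖(fun i j => Φ x i j - m i j)‖^6)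
          ≤ (volume (ball (0:E3) (4*r))).toReal * (C * (4*r)) := by
        rw [← inv_mul_le_iff₀ hvpos]
        exact hosc4
      calc (∫ x in ball (0:E3) (4*r), ‖(fun i j => Φ x i j - m i j)‖^6)
          ≤ (volume (ball (0:E3) (4*r))).toReal * (C * (4*r)) := h2
        _ = c1 * r^(4:ℕ) := by rw [hvol4, hc1def]; ring
    have habsle : ∀ (x : E3) (i j : Fin 3), |Φ x i j - m i j|
        ≤ ‖(fun i j => Φ x i j - m i j)‖ :=
      fun x i j => comp_le_norm (fun i j => Φ x i j - m i j) i j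
    have hPw6 : ∀ i j : Fin 3, ∫ x in T, |Φ x i j - m i j|^6 ≤ c1 * r^(4:ℕ) := by
      intro i j
      have hcont6 : Continuous fun x => |Φ x i j - m i j|^6 :=
        (((hΦijc i j).sub continuous_const).abs).pow 6
      calc ∫ x in T, |Φ x i j - m i j|^6
          ≤ ∫ x in ball (0:E3) (4*r), |Φ x i j - m i j|^6 := by
            apply setIntegral_mono_set
              (integrableOn_of_cont hcont6 measurableSet_ball ball_subset_closedBall)
              (ae_of_all _ fun x => by positivity)
            exact HasSubset.Subset.eventuallyLE diff_subset
        _ ≤ ∫ x in ball (0:E3) (4*r), ‖(fun i j => Φ x i j - m i j)‖^6 := by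
            apply setIntegral_mono_on
              (integrableOn_of_cont hcont6 measurableSet_ball ball_subset_closedBall)
              (integrableOn_of_cont hmatc measurableSet_ball ball_subset_closedBall)
              measurableSet_ball
            intro x _
            exact pow_le_pow_left₀ (abs_nonneg _) (habsle x i j) 6
        _ ≤ c1 * r^(4:ℕ) := hI6
    have hPw3 : ∀ i j : Fin 3, ∫ x in T, |Φ x i j - m i j|^3 ≤ c2 * r^((7:ℝ)/2) := by
      intro i j
      have hcont3 : Continuous fun x => |Φ x i j - m i j|^3 :=
        (((hΦijc i j).sub continuous_const).abs).pow 3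
      have hold := integral_mul_le_Lp_mul_Lq_of_nonneg (μ := volume.restrict T)
        (p := 2) (q := 2) ⟨by norm_num, by norm_num, by norm_num⟩
        (f := fun x => |Φ x i j - m i j|^3) (g := fun _ => (1:ℝ))
        (ae_of_all _ fun x => by positivity)
        (ae_of_all _ fun _ => zero_le_one)
        (memLp_restrict hcont3 hTm hTsub _)
        (memLp_restrict continuous_const hTm hTsub _)
      simp only [mul_one] at hold
      have e1 : ∫ x in T, (|Φ x i j - m i j|^3) ^ (2:ℝ)
          = ∫ x in T, |Φ x i j - m i j|^6 := by
        apply setIntegral_congr_fun hTm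
        intro x _
        exact pow_rpow_collapse (by positivity) (by norm_num)
      have e2 : (∫ x in T, ((1:ℝ)) ^ (2:ℝ)) = (volume T).toReal := by
        simp [Measure.real]
      rw [e1, e2] at hold
      have hPw60 : (0:ℝ) ≤ ∫ x in T, |Φ x i j - m i j|^6 :=
        setIntegral_nonneg hTm (fun x _ => by positivity)
      have hb1' : (∫ x in T, |Φ x i j - m i j|^6) ^ ((1:ℝ)/2)
          ≤ (c1 * r^(4:ℕ)) ^ ((1:ℝ)/2) :=
        Real.rpow_le_rpow hPw60 (hPw6 i j) (by norm_num)
      have hb2' : ((volume T).toReal) ^ ((1:ℝ)/2) ≤ (64 * r^(3:ℕ) * V) ^ ((1:ℝ)/2) :=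
        Real.rpow_le_rpow ENNReal.toReal_nonneg hvolT (by norm_num)
      have hp1 : ((r:ℝ)^(4:ℕ)) ^ ((1:ℝ)/2) = r ^ ((2:ℝ)) := by
        rw [← Real.rpow_natCast r 4, ← Real.rpow_mul hr0.le]; norm_num
      have hp2 : ((r:ℝ)^(3:ℕ)) ^ ((1:ℝ)/2) = r ^ ((3:ℝ)/2) := by
        rw [← Real.rpow_natCast r 3, ← Real.rpow_mul hr0.le]; norm_num
      have hp3 : r ^ ((2:ℝ)) * r ^ ((3:ℝ)/2) = r ^ ((7:ℝ)/2) := by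
        rw [← Real.rpow_add hr0]; norm_num
      have hfin : (c1 * r^(4:ℕ)) ^ ((1:ℝ)/2) * (64 * r^(3:ℕ) * V) ^ ((1:ℝ)/2)
          = c2 * r^((7:ℝ)/2) := by
        have e3 : (64:ℝ) * r^(3:ℕ) * V = (64*V) * r^(3:ℕ) := by ring
        rw [e3, Real.mul_rpow hc1 (by positivity),
          Real.mul_rpow (x := 64*V) (y := r^(3:ℕ)) (by positivity) (by positivity),
          hp1, hp2, hc2def, ← hp3]
        ring
      calc ∫ x in T, |Φ x i j - m i j|^3
          ≤ (∫ x in T, |Φ x i j - m i j|^6) ^ ((1:ℝ)/2) * ((volume T).toReal) ^ ((1:ℝ)/2) :=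
            hold
        _ ≤ (c1 * r^(4:ℕ)) ^ ((1:ℝ)/2) * (64 * r^(3:ℕ) * V) ^ ((1:ℝ)/2) :=
            mul_le_mul hb1' hb2' (Real.rpow_nonneg ENNReal.toReal_nonneg _)
              (Real.rpow_nonneg (by positivity) _)
        _ = c2 * r^((7:ℝ)/2) := hfin
    -- gradient integral
    set Dq : ℝ := ∫ x in T, ‖fderiv ℝ u x‖^2 with hDqdef
    have hDq0 : 0 ≤ Dq := setIntegral_nonneg hTm (fun x _ => by positivity)
    -- the key estimate for each component j
    have hblock : ∀ j : Fin 3, (∫ x in T, (ψ x * |u x j|)^3)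
        ≤ a1 * r ^ ((1:ℝ)/2) + b1 * (r * Dq ^ ((3:ℝ)/4)) := by
      intro j
      have hujcd : ContDiff ℝ (⊤ : ℕ∞) (fun x => u x j) := contDiff_pi.1 hu j
      have hujc : Continuous fun x => u x j := hujcd.continuous
      set U' : E3 → E3 →L[ℝ] ℝ := fun x => fderiv ℝ (fun y => u y j) x with hU'def
      have hU'c : ∀ i : Fin 3, Continuous fun x => U' x (EuclideanSpace.single i 1) :=
        fun i => (hujcd.continuous_fderiv (by simp)).clm_apply continuous_const
      have hU'bound : ∀ x, ∀ i : Fin 3, |U' x (EuclideanSpace.single i 1)|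
          ≤ ‖fderiv ℝ u x‖ := by
        intro x i
        have hfd : U' x = (ContinuousLinearMap.proj (R := ℝ) (φ := fun _ : Fin 3 => ℝ) j).comp
            (fderiv ℝ u x) :=
          ((ContinuousLinearMap.proj (R := ℝ) (φ := fun _ : Fin 3 => ℝ) j).hasFDerivAt.comp x
            (hu.differentiable (by simp) x).hasFDerivAt).fderiv
        rw [hfd]
        calc |((fderiv ℝ u x) (EuclideanSpace.single i 1)) j|
            ≤ ‖(fderiv ℝ u x) (EuclideanSpace.single i 1)‖ := by
              rw [← Real.norm_eq_abs]
              exact norm_le_pi_norm _ j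
          _ ≤ ‖fderiv ℝ u x‖ * ‖EuclideanSpace.single i (1:ℝ)‖ :=
              ContinuousLinearMap.le_opNorm _ _
          _ = ‖fderiv ℝ u x‖ := by rw [EuclideanSpace.norm_single]; simp
      set Iq : ℝ := ∫ x in T, (ψ x * |u x j|)^3 with hIqdef
      have hIq0 : 0 ≤ Iq := setIntegral_nonneg hTm
        (fun x _ => pow_nonneg (mul_nonneg (hψ0 x) (abs_nonneg _)) 3)
      set G1 : Fin 3 → E3 → ℝ := fun i x => (ψ x^3 * (u x j * |u x j|)) *
        (fderiv ℝ (fun y => Φ y i j) x (EuclideanSpace.single i 1)) with hG1def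
      have hG1c : ∀ i, Continuous (G1 i) := fun i =>
        ((hψcont.pow 3).mul (hujc.mul hujc.abs)).mul
          (((hΦijcd i j).continuous_fderiv (by simp)).clm_apply continuous_const)
      have hG1int : ∀ i, IntegrableOn (G1 i) T := fun i =>
        integrableOn_of_cont (hG1c i) hTm hTsub
      have hIqsum : Iq = ∑ i, ∫ x in T, G1 i x := by
        rw [← integral_finset_sum _ (fun i _ => hG1int i), hIqdef]
        apply setIntegral_congr_fun hTm
        intro x _
        show (ψ x * |u x j|)^3 = ∑ i, G1 i x
        have h1 : ∑ i, G1 i x = (ψ x^3 * (u x j * |u x j|)) *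
            ∑ i, fderiv ℝ (fun y => Φ y i j) x (EuclideanSpace.single i 1) :=
          (Finset.mul_sum _ _ _).symm
        have h2 : ∑ i, fderiv ℝ (fun y => Φ y i j) x (EuclideanSpace.single i 1)
            = u x j := by
          rw [hdiv x j]
          simp only [matDiv, pd]
        rw [h1, h2, mul_pow, mul_assoc, q_mul_self]
      have hG1bound : ∀ i : Fin 3, (∫ x in T, G1 i x)
          ≤ 3*(K/r) * (Iq ^ ((2:ℝ)/3) * (c2 * r^((7:ℝ)/2)) ^ ((1:ℝ)/3))
            + 2*(Iq ^ ((1:ℝ)/3) * (Dq ^ ((1:ℝ)/2) * (c1 * r^(4:ℕ)) ^ ((1:ℝ)/6))) := by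
        intro i
        set W : E3 → ℝ := fun x => ψ x^3 * (u x j * |u x j|) * (Φ x i j - m i j) with hWdef
        set W' : E3 → E3 →L[ℝ] ℝ := fun x =>
          (ψ x^3 * (u x j * |u x j|)) • fderiv ℝ (fun y => Φ y i j) x
          + (Φ x i j - m i j) • ((ψ x^3) • ((2*|u x j|) • U' x)
            + (u x j * |u x j|) • ((3*ψ x^2) • Dψ x)) with hW'def
        have hW'd : ∀ x, HasFDerivAt W (W' x) x := by
          intro x
          have h1 : HasFDerivAt (fun y => ψ y^3) ((3*ψ x^2) • Dψ x) x := by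
            have h := (hasDerivAt_pow 3 (ψ x)).comp_hasFDerivAt x (hψd x)
            norm_num at h
            exact h
          have h2 : HasFDerivAt (fun y => u y j * |u y j|) ((2*|u x j|) • U' x) x := by
            have h := (q_hasDerivAt (u x j)).comp_hasFDerivAt x
              ((hujcd.differentiable (by simp) x).hasFDerivAt)
            exact h
          have h4 : HasFDerivAt (fun y => Φ y i j - m i j)
              (fderiv ℝ (fun y => Φ y i j) x) x :=
            (((hΦijcd i j).differentiable (by simp) x).hasFDerivAt).sub_const _
          exact (h1.mul h2).mul h4
        set g2 : E3 → ℝ := fun x => (Φ x i j - m i j) *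
          (ψ x^3 * (2*|u x j| * U' x (EuclideanSpace.single i 1))
            + (u x j * |u x j|) * (3*ψ x^2 * Dψ x (EuclideanSpace.single i 1))) with hg2def
        have happly : ∀ x, W' x (EuclideanSpace.single i 1) = G1 i x + g2 x := by
          intro x
          simp only [hW'def, hG1def, hg2def, ContinuousLinearMap.add_apply,
            ContinuousLinearMap.coe_smul', Pi.smul_apply, smul_eq_mul]
          try ring
        have hWc : Continuous W :=
          ((hψcont.pow 3).mul (hujc.mul hujc.abs)).mul
            ((hΦijc i j).sub continuous_const)
        have hWsupp : HasCompactSupport W :=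
          HasCompactSupport.intro (isCompact_closedBall (0:E3) (4*r)) (fun x hx => by
            have h0 : ψ x = 0 := hψzero x (fun hmem => hx (hTsub hmem))
            simp [hWdef, h0])
        have hg2c : Continuous g2 :=
          ((hΦijc i j).sub continuous_const).mul
            (((hψcont.pow 3).mul ((continuous_const.mul hujc.abs).mul (hU'c i))).add
              ((hujc.mul hujc.abs).mul
                ((continuous_const.mul (hψcont.pow 2)).mul (hψdcont i))))
        have hW'capp : Continuous fun x => W' x (EuclideanSpace.single i 1) := by
          have heq : (fun x => W' x (EuclideanSpace.single i 1))
              = fun x => G1 i x + g2 x := funext happly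
          rw [heq]
          exact (hG1c i).add hg2c
        have hibp0 : ∫ x, W' x (EuclideanSpace.single i 1) = 0 :=
          e3_ibp W W' hW'd hWc hWsupp i hW'capp
        have hg1supp : HasCompactSupport (G1 i) :=
          HasCompactSupport.intro (isCompact_closedBall (0:E3) (4*r)) (fun x hx => by
            have h0 : ψ x = 0 := hψzero x (fun hmem => hx (hTsub hmem))
            simp [hG1def, h0])
        have hg2supp : HasCompactSupport g2 :=
          HasCompactSupport.intro (isCompact_closedBall (0:E3) (4*r)) (fun x hx => by
            have h0 : ψ x = 0 := hψzero x (fun hmem => hx (hTsub hmem))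
            simp [hg2def, h0])
        have hg1i : Integrable (G1 i) := (hG1c i).integrable_of_hasCompactSupport hg1supp
        have hg2i : Integrable g2 := hg2c.integrable_of_hasCompactSupport hg2supp
        have hsplit : (∫ x, G1 i x) + (∫ x, g2 x) = 0 := by
          rw [← integral_add hg1i hg2i, ← hibp0]
          exact integral_congr_ae (ae_of_all _ fun x => (happly x).symm)
        have hTg1 : ∫ x in T, G1 i x = ∫ x, G1 i x :=
          setIntegral_eq_integral_of_forall_compl_eq_zero (fun x hx => by
            simp [hG1def, hψzero x hx])
        have hTg2 : ∫ x in T, |g2 x| = ∫ x, |g2 x| :=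
          setIntegral_eq_integral_of_forall_compl_eq_zero (fun x hx => by
            simp [hg2def, hψzero x hx])
        -- pointwise bound on |g2|
        have hΦabs : Continuous fun x => |Φ x i j - m i j| :=
          ((hΦijc i j).sub continuous_const).abs
        have hptw : ∀ x, |g2 x| ≤
            3*(K/r) * ((ψ x * |u x j|)^2 * |Φ x i j - m i j|)
            + 2*((ψ x * |u x j|) * (|U' x (EuclideanSpace.single i 1)|
                * (ψ x^2 * |Φ x i j - m i j|))) := by
          intro x
          have hdK : |Dψ x (EuclideanSpace.single i 1)| ≤ K/r := hψdapp x i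
          have hstep1 : |g2 x| ≤ |Φ x i j - m i j| *
              (ψ x^3 * (2*|u x j| * |U' x (EuclideanSpace.single i 1)|)
                + (|u x j| * |u x j|) * (3*ψ x^2 * |Dψ x (EuclideanSpace.single i 1)|)) := by
            rw [hg2def]
            rw [abs_mul]
            apply mul_le_mul_of_nonneg_left _ (abs_nonneg _)
            refine le_trans (abs_add_le _ _) ?_
            have h1 : |ψ x^3 * (2*|u x j| * U' x (EuclideanSpace.single i 1))|
                = ψ x^3 * (2*|u x j| * |U' x (EuclideanSpace.single i 1)|) := by
              rw [abs_mul, abs_of_nonneg (pow_nonneg (hψ0 x) 3), abs_mul,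
                abs_of_nonneg (by positivity : (0:ℝ) ≤ 2*|u x j|)]
            have h2 : |(u x j * |u x j|) * (3*ψ x^2 * Dψ x (EuclideanSpace.single i 1))|
                = (|u x j| * |u x j|) * (3*ψ x^2 * |Dψ x (EuclideanSpace.single i 1)|) := by
              rw [abs_mul]
              congr 1
              · rw [abs_mul, abs_abs]
              · rw [abs_mul, abs_of_nonneg (mul_nonneg (by norm_num)
                  (pow_nonneg (hψ0 x) 2) : (0:ℝ) ≤ 3*ψ x^2)]
            rw [h1, h2]
          refine le_trans hstep1 ?_
          have hstep2 : |Φ x i j - m i j| *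
              (ψ x^3 * (2*|u x j| * |U' x (EuclideanSpace.single i 1)|)
                + (|u x j| * |u x j|) * (3*ψ x^2 * |Dψ x (EuclideanSpace.single i 1)|))
              ≤ |Φ x i j - m i j| *
              (ψ x^3 * (2*|u x j| * |U' x (EuclideanSpace.single i 1)|)
                + (|u x j| * |u x j|) * (3*ψ x^2 * (K/r))) := by
            apply mul_le_mul_of_nonneg_left _ (abs_nonneg _)
            have : (|u x j| * |u x j|) * (3*ψ x^2 * |Dψ x (EuclideanSpace.single i 1)|)
                ≤ (|u x j| * |u x j|) * (3*ψ x^2 * (K/r)) := by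
              apply mul_le_mul_of_nonneg_left _ (mul_nonneg (abs_nonneg _) (abs_nonneg _))
              exact mul_le_mul_of_nonneg_left hdK
                (mul_nonneg (by norm_num) (pow_nonneg (hψ0 x) 2))
            linarith
          refine le_trans hstep2 (le_of_eq ?_)
          ring
        -- Hölder estimate A
        have hprodA : Continuous fun x => (ψ x * |u x j|)^2 :=
          (hψcont.mul hujc.abs).pow 2
        have hAest : (∫ x in T, (ψ x * |u x j|)^2 * |Φ x i j - m i j|)
            ≤ Iq ^ ((2:ℝ)/3) * (c2 * r^((7:ℝ)/2)) ^ ((1:ℝ)/3) := by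
          have hold := integral_mul_le_Lp_mul_Lq_of_nonneg (μ := volume.restrict T)
            (p := 3/2) (q := 3) ⟨by norm_num, by norm_num, by norm_num⟩
            (f := fun x => (ψ x * |u x j|)^2) (g := fun x => |Φ x i j - m i j|)
            (ae_of_all _ fun x => by positivity)
            (ae_of_all _ fun x => abs_nonneg _)
            (memLp_restrict hprodA hTm hTsub _)
            (memLp_restrict hΦabs hTm hTsub _)
          have e1 : ∫ x in T, ((ψ x * |u x j|)^2) ^ ((3:ℝ)/2) = Iq := by
            rw [hIqdef]
            apply setIntegral_congr_fun hTm
            intro x _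
            exact pow_rpow_collapse (mul_nonneg (hψ0 x) (abs_nonneg _)) (by norm_num)
          have e2 : (∫ x in T, |Φ x i j - m i j| ^ ((3:ℝ)))
              = ∫ x in T, |Φ x i j - m i j|^(3:ℕ) := by
            apply setIntegral_congr_fun hTm
            intro x _
            show |Φ x i j - m i j| ^ ((3:ℝ)) = |Φ x i j - m i j|^(3:ℕ)
            rw [show ((3:ℝ)) = ((3:ℕ):ℝ) by norm_num, Real.rpow_natCast]
          have e3 : (1:ℝ)/(3/2) = (2:ℝ)/3 := by norm_num
          rw [e1, e2, e3] at hold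
          refine le_trans hold ?_
          apply mul_le_mul_of_nonneg_left _ (Real.rpow_nonneg hIq0 _)
          exact Real.rpow_le_rpow (setIntegral_nonneg hTm (fun x _ => by positivity))
            (hPw3 i j) (by norm_num)
        -- Hölder estimate B
        have hBest : (∫ x in T, (ψ x * |u x j|) *
              (|U' x (EuclideanSpace.single i 1)| * (ψ x^2 * |Φ x i j - m i j|)))
            ≤ Iq ^ ((1:ℝ)/3) * (Dq ^ ((1:ℝ)/2) * (c1 * r^(4:ℕ)) ^ ((1:ℝ)/6)) := by
          have hgc : Continuous fun x => |U' x (EuclideanSpace.single i 1)| *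
              (ψ x^2 * |Φ x i j - m i j|) :=
            (hU'c i).abs.mul ((hψcont.pow 2).mul hΦabs)
          have hold := integral_mul_le_Lp_mul_Lq_of_nonneg (μ := volume.restrict T)
            (p := 3) (q := 3/2) ⟨by norm_num, by norm_num, by norm_num⟩
            (f := fun x => ψ x * |u x j|)
            (g := fun x => |U' x (EuclideanSpace.single i 1)| * (ψ x^2 * |Φ x i j - m i j|))
            (ae_of_all _ fun x => mul_nonneg (hψ0 x) (abs_nonneg _))
            (ae_of_all _ fun x => by positivity)
            (memLp_restrict (hψcont.mul hujc.abs) hTm hTsub _)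
            (memLp_restrict hgc hTm hTsub _)
          have e1 : (∫ x in T, (ψ x * |u x j|) ^ ((3:ℝ))) = Iq := by
            rw [hIqdef]
            apply setIntegral_congr_fun hTm
            intro x _
            show (ψ x * |u x j|) ^ ((3:ℝ)) = (ψ x * |u x j|)^(3:ℕ)
            rw [show ((3:ℝ)) = ((3:ℕ):ℝ) by norm_num, Real.rpow_natCast]
          have e3 : (1:ℝ)/(3:ℝ) = (1:ℝ)/3 := by norm_num
          rw [e1] at hold
          refine le_trans hold ?_
          apply mul_le_mul_of_nonneg_left _ (Real.rpow_nonneg hIq0 _)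
          -- second Hölder application
          have hold2 := integral_mul_le_Lp_mul_Lq_of_nonneg (μ := volume.restrict T)
            (p := 4/3) (q := 4) ⟨by norm_num, by norm_num, by norm_num⟩
            (f := fun x => |U' x (EuclideanSpace.single i 1)| ^ ((3:ℝ)/2))
            (g := fun x => (ψ x^2 * |Φ x i j - m i j|) ^ ((3:ℝ)/2))
            (ae_of_all _ fun x => by positivity)
            (ae_of_all _ fun x => by positivity)
            (memLp_restrict ((hU'c i).abs.rpow_const (fun x => Or.inr (by norm_num)))
              hTm hTsub _)
            (memLp_restrict (((hψcont.pow 2).mul hΦabs).rpow_const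
              (fun x => Or.inr (by norm_num))) hTm hTsub _)
          have e4 : (∫ x in T, ((fun x => |U' x (EuclideanSpace.single i 1)|
                * (ψ x^2 * |Φ x i j - m i j|)) x) ^ ((3:ℝ)/2))
              = ∫ x in T, |U' x (EuclideanSpace.single i 1)| ^ ((3:ℝ)/2)
                * ((ψ x^2 * |Φ x i j - m i j|)) ^ ((3:ℝ)/2) := by
            apply setIntegral_congr_fun hTm
            intro x _
            exact Real.mul_rpow (abs_nonneg _) (by positivity)
          have e5 : (∫ x in T, (|U' x (EuclideanSpace.single i 1)| ^ ((3:ℝ)/2)) ^ ((4:ℝ)/3))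
              = ∫ x in T, |U' x (EuclideanSpace.single i 1)|^(2:ℕ) := by
            apply setIntegral_congr_fun hTm
            intro x _
            exact rpow_rpow_collapse (abs_nonneg _) (by norm_num)
          have e6 : (∫ x in T, (((ψ x^2 * |Φ x i j - m i j|)) ^ ((3:ℝ)/2)) ^ ((4:ℝ)))
              = ∫ x in T, (ψ x^2 * |Φ x i j - m i j|)^(6:ℕ) := by
            apply setIntegral_congr_fun hTm
            intro x _
            exact rpow_rpow_collapse (by positivity) (by norm_num)
          have hX : ∫ x in T, |U' x (EuclideanSpace.single i 1)|^(2:ℕ) ≤ Dq := by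
            rw [hDqdef]
            apply setIntegral_mono_on
              (integrableOn_of_cont ((hU'c i).abs.pow 2) hTm hTsub)
              hL2.integrableOn hTm
            intro x _
            exact pow_le_pow_left₀ (abs_nonneg _) (hU'bound x i) 2
          have hY : ∫ x in T, (ψ x^2 * |Φ x i j - m i j|)^(6:ℕ) ≤ c1 * r^(4:ℕ) := by
            refine le_trans ?_ (hPw6 i j)
            apply setIntegral_mono_on
              (integrableOn_of_cont (((hψcont.pow 2).mul hΦabs).pow 6) hTm hTsub)
              (integrableOn_of_cont ((((hΦijc i j).sub continuous_const).abs).pow 6)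
                hTm hTsub) hTm
            intro x _
            show (ψ x^2 * |Φ x i j - m i j|)^(6:ℕ) ≤ |Φ x i j - m i j|^6
            rw [mul_pow]
            have h1 : (ψ x^2)^6 ≤ 1 := pow_le_one₀ (by positivity)
              (pow_le_one₀ (hψ0 x) (hψ1 x))
            nlinarith [pow_nonneg (abs_nonneg (Φ x i j - m i j)) 6,
              pow_nonneg (pow_nonneg (hψ0 x) 2) 6]
          have hX0 : (0:ℝ) ≤ ∫ x in T, |U' x (EuclideanSpace.single i 1)|^(2:ℕ) :=
            setIntegral_nonneg hTm (fun x _ => by positivity)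
          have hY0 : (0:ℝ) ≤ ∫ x in T, (ψ x^2 * |Φ x i j - m i j|)^(6:ℕ) :=
            setIntegral_nonneg hTm (fun x _ => by positivity)
          have e7 : (1:ℝ)/(4/3) = (3:ℝ)/4 := by norm_num
          rw [e5, e6, e7] at hold2
          have hinner : (∫ x in T, (|U' x (EuclideanSpace.single i 1)|
                * (ψ x^2 * |Φ x i j - m i j|)) ^ ((3:ℝ)/2))
              ≤ Dq ^ ((3:ℝ)/4) * (c1 * r^(4:ℕ)) ^ ((1:ℝ)/4) := by
            rw [e4]
            refine le_trans hold2 ?_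
            apply mul_le_mul
            · exact Real.rpow_le_rpow hX0 hX (by norm_num)
            · exact Real.rpow_le_rpow hY0 hY (by norm_num)
            · exact Real.rpow_nonneg hY0 _
            · exact Real.rpow_nonneg hDq0 _
          have hinner0 : (0:ℝ) ≤ ∫ x in T, (|U' x (EuclideanSpace.single i 1)|
                * (ψ x^2 * |Φ x i j - m i j|)) ^ ((3:ℝ)/2) :=
            setIntegral_nonneg hTm (fun x _ => by positivity)
          calc (∫ x in T, (|U' x (EuclideanSpace.single i 1)|
                * (ψ x^2 * |Φ x i j - m i j|)) ^ ((3:ℝ)/2)) ^ ((1:ℝ)/(3/2))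
              ≤ (Dq ^ ((3:ℝ)/4) * (c1 * r^(4:ℕ)) ^ ((1:ℝ)/4)) ^ ((1:ℝ)/(3/2)) :=
                Real.rpow_le_rpow hinner0 hinner (by norm_num)
            _ = Dq ^ ((1:ℝ)/2) * (c1 * r^(4:ℕ)) ^ ((1:ℝ)/6) := by
                rw [show (1:ℝ)/(3/2) = (2:ℝ)/3 by norm_num,
                  Real.mul_rpow (Real.rpow_nonneg hDq0 _) (Real.rpow_nonneg
                    (by positivity) _),
                  ← Real.rpow_mul hDq0, ← Real.rpow_mul (by positivity : (0:ℝ) ≤ c1 * r^(4:ℕ))]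
                norm_num
        -- putting the per-i estimate together
        have hcontB1 : Continuous fun x => (ψ x * |u x j|)^2 * |Φ x i j - m i j| :=
          hprodA.mul hΦabs
        have hcontB2 : Continuous fun x => (ψ x * |u x j|) *
            (|U' x (EuclideanSpace.single i 1)| * (ψ x^2 * |Φ x i j - m i j|)) :=
          (hψcont.mul hujc.abs).mul ((hU'c i).abs.mul ((hψcont.pow 2).mul hΦabs))
        calc ∫ x in T, G1 i x
            = ∫ x, G1 i x := hTg1
          _ = - ∫ x, g2 x := by linarith [hsplit]
          _ ≤ |∫ x, g2 x| := neg_le_abs _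
          _ ≤ ∫ x, |g2 x| := by
              simpa [Real.norm_eq_abs] using
                norm_integral_le_integral_norm (f := g2) (μ := volume)
          _ = ∫ x in T, |g2 x| := hTg2.symm
          _ ≤ ∫ x in T, (3*(K/r) * ((ψ x * |u x j|)^2 * |Φ x i j - m i j|)
              + 2*((ψ x * |u x j|) * (|U' x (EuclideanSpace.single i 1)|
                * (ψ x^2 * |Φ x i j - m i j|)))) := by
              apply setIntegral_mono_on hg2i.abs.integrableOn
                (((integrableOn_of_cont hcontB1 hTm hTsub).const_mul (3*(K/r))).add
                  ((integrableOn_of_cont hcontB2 hTm hTsub).const_mul 2)) hTm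
              intro x _
              exact hptw x
          _ = 3*(K/r) * (∫ x in T, (ψ x * |u x j|)^2 * |Φ x i j - m i j|)
              + 2*(∫ x in T, (ψ x * |u x j|) * (|U' x (EuclideanSpace.single i 1)|
                * (ψ x^2 * |Φ x i j - m i j|))) := by
              rw [integral_add ((integrableOn_of_cont hcontB1 hTm hTsub).const_mul (3*(K/r)))
                ((integrableOn_of_cont hcontB2 hTm hTsub).const_mul 2),
                integral_const_mul (3*(K/r)), integral_const_mul 2]
          _ ≤ 3*(K/r) * (Iq ^ ((2:ℝ)/3) * (c2 * r^((7:ℝ)/2)) ^ ((1:ℝ)/3))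
              + 2*(Iq ^ ((1:ℝ)/3) * (Dq ^ ((1:ℝ)/2) * (c1 * r^(4:ℕ)) ^ ((1:ℝ)/6))) := by
              apply add_le_add
              · exact mul_le_mul_of_nonneg_left hAest (by positivity)
              · exact mul_le_mul_of_nonneg_left hBest (by norm_num)
      -- sum over i and absorb
      have hIqmain : Iq ≤ 9*(K/r) * (Iq ^ ((2:ℝ)/3) * (c2 * r^((7:ℝ)/2)) ^ ((1:ℝ)/3))
          + 6*(Iq ^ ((1:ℝ)/3) * (Dq ^ ((1:ℝ)/2) * (c1 * r^(4:ℕ)) ^ ((1:ℝ)/6))) := by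
        calc Iq = ∑ i, ∫ x in T, G1 i x := hIqsum
          _ ≤ ∑ _i : Fin 3, (3*(K/r) * (Iq ^ ((2:ℝ)/3) * (c2 * r^((7:ℝ)/2)) ^ ((1:ℝ)/3))
              + 2*(Iq ^ ((1:ℝ)/3) * (Dq ^ ((1:ℝ)/2) * (c1 * r^(4:ℕ)) ^ ((1:ℝ)/6)))) :=
            Finset.sum_le_sum (fun i _ => hG1bound i)
          _ = 9*(K/r) * (Iq ^ ((2:ℝ)/3) * (c2 * r^((7:ℝ)/2)) ^ ((1:ℝ)/3))
              + 6*(Iq ^ ((1:ℝ)/3) * (Dq ^ ((1:ℝ)/2) * (c1 * r^(4:ℕ)) ^ ((1:ℝ)/6))) := by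
            rw [Finset.sum_const, Finset.card_univ, Fintype.card_fin, nsmul_eq_mul]
            push_cast
            ring
      have habs := assemble hK hc1 hc2 hr hIq0 hDq0
        (by positivity : (0:ℝ) ≤ c2 * r^((7:ℝ)/2)) (by positivity : (0:ℝ) ≤ c1 * r^(4:ℕ))
        (le_refl _) (le_refl _) hIqmain
      rw [← ha1def, ← hb1def] at habs
      exact habs
    -- conclusion
    have hannm : MeasurableSet (ball (0:E3) (3*r) \ ball (0:E3) (2*r)) :=
      measurableSet_ball.diff measurableSet_ball
    have hannsub : ball (0:E3) (3*r) \ ball (0:E3) (2*r) ⊆ T := by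
      intro x hx
      obtain ⟨h1, h2⟩ := hx
      rw [mem_ball, dist_zero_right] at h1
      rw [mem_ball, dist_zero_right, not_lt] at h2
      constructor
      · rw [mem_ball, dist_zero_right]; linarith
      · intro hmem
        rw [mem_ball, dist_zero_right] at hmem
        linarith
    have hucont : Continuous fun x => ‖u x‖^3 := (hu.continuous.norm).pow 3
    have hujabs : ∀ j : Fin 3, Continuous fun x => |u x j|^3 := fun j =>
      ((continuous_apply j).comp hu.continuous).abs.pow 3
    have hsumcont : Continuous fun x => ∑ j, |u x j|^3 :=
      continuous_finset_sum _ (fun j _ => hujabs j)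
    have hXD0 : 0 ≤ r * Dq ^ ((3:ℝ)/4) := mul_nonneg hr0.le (Real.rpow_nonneg hDq0 _)
    have hY0 : (0:ℝ) ≤ r ^ ((1:ℝ)/2) := Real.rpow_nonneg hr0.le _
    have hc3a : 3*a1 ≤ c := by rw [hcdef]; linarith
    have hc3b : 3*b1 ≤ c := by rw [hcdef]; linarith
    calc ∫ x in ball (0:E3) (3*r) \ ball (0:E3) (2*r), ‖u x‖^3
        ≤ ∫ x in ball (0:E3) (3*r) \ ball (0:E3) (2*r), ∑ j, |u x j|^3 := by
          apply setIntegral_mono_on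
            (integrableOn_of_cont hucont hannm (hannsub.trans hTsub))
            (integrableOn_of_cont hsumcont hannm (hannsub.trans hTsub)) hannm
          intro x _
          exact norm_cube_le_sum (u x)
      _ = ∑ j, ∫ x in ball (0:E3) (3*r) \ ball (0:E3) (2*r), |u x j|^3 :=
          integral_finset_sum _ (fun j _ =>
            integrableOn_of_cont (hujabs j) hannm (hannsub.trans hTsub))
      _ = ∑ j, ∫ x in ball (0:E3) (3*r) \ ball (0:E3) (2*r), (ψ x * |u x j|)^3 := by
          apply Finset.sum_congr rfl
          intro j _
          apply setIntegral_congr_fun hannm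
          intro x hx
          show |u x j|^3 = (ψ x * |u x j|)^3
          rw [hψone x hx, one_mul]
      _ ≤ ∑ j, ∫ x in T, (ψ x * |u x j|)^3 := by
          apply Finset.sum_le_sum
          intro j _
          apply setIntegral_mono_set
            (integrableOn_of_cont ((hψcont.mul ((continuous_apply j).comp
              hu.continuous).abs).pow 3) hTm hTsub)
            (ae_of_all _ fun x => pow_nonneg (mul_nonneg (hψ0 x) (abs_nonneg _)) 3)
            (HasSubset.Subset.eventuallyLE hannsub)
      _ ≤ ∑ _j : Fin 3, (a1 * r ^ ((1:ℝ)/2) + b1 * (r * Dq ^ ((3:ℝ)/4))) :=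
          Finset.sum_le_sum (fun j _ => hblock j)
      _ = 3*(a1 * r ^ ((1:ℝ)/2) + b1 * (r * Dq ^ ((3:ℝ)/4))) := by
          rw [Finset.sum_const, Finset.card_univ, Fintype.card_fin, nsmul_eq_mul]
          push_cast
          ring
      _ = (3*b1)*(r * Dq ^ ((3:ℝ)/4)) + (3*a1) * r ^ ((1:ℝ)/2) := by ring
      _ ≤ c*(r * Dq ^ ((3:ℝ)/4)) + c * r ^ ((1:ℝ)/2) :=
          add_le_add (mul_le_mul_of_nonneg_right hc3b hXD0)
            (mul_le_mul_of_nonneg_right hc3a hY0)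
      _ = c * r * Dq ^ ((3:ℝ)/4) + c * r ^ ((1:ℝ)/2) := by ring
  refine ⟨⟨c, hc0, main⟩, ?_⟩
  -- the tendsto part
  have hg0 : ∀ x : E3, 0 ≤ ‖fderiv ℝ u x‖^2 := fun x => by positivity
  have hEt := tail_tendsto hL2 hg0
  have hup : Tendsto (fun r : ℝ =>
      c * (∫ x in (ball (0:E3) r)ᶜ, ‖fderiv ℝ u x‖^2) ^ ((3:ℝ)/4)
        + c * r ^ (-((1:ℝ)/2))) atTop (nhds 0) := by
    have h1 : Tendsto (fun r : ℝ =>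
        (∫ x in (ball (0:E3) r)ᶜ, ‖fderiv ℝ u x‖^2) ^ ((3:ℝ)/4)) atTop (nhds 0) := by
      have := hEt.rpow_const (p := (3:ℝ)/4) (Or.inr (by norm_num))
      simpa [Real.zero_rpow (by norm_num : ((3:ℝ)/4) ≠ 0)] using this
    have h2 : Tendsto (fun r : ℝ => r ^ (-((1:ℝ)/2))) atTop (nhds 0) :=
      tendsto_rpow_neg_atTop (by norm_num)
    have := (h1.const_mul c).add (h2.const_mul c)
    simpa using this
  apply tendsto_of_tendsto_of_tendsto_of_le_of_le' tendsto_const_nhds hup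
  · filter_upwards [eventually_gt_atTop (0:ℝ)] with r hr
    apply mul_nonneg (inv_nonneg.2 hr.le)
    exact setIntegral_nonneg (measurableSet_ball.diff measurableSet_ball)
      (fun x _ => by positivity)
  · filter_upwards [eventually_gt_atTop (1:ℝ)] with r hr
    have hr0 : (0:ℝ) < r := lt_trans one_pos hr
    have hDsub : (∫ x in ball (0:E3) (4*r) \ ball (0:E3) r, ‖fderiv ℝ u x‖^2)
        ≤ ∫ x in (ball (0:E3) r)ᶜ, ‖fderiv ℝ u x‖^2 := by
      apply setIntegral_mono_set hL2.integrableOn (ae_of_all _ hg0)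
      apply HasSubset.Subset.eventuallyLE
      intro x hx
      exact hx.2
    have hD0 : 0 ≤ ∫ x in ball (0:E3) (4*r) \ ball (0:E3) r, ‖fderiv ℝ u x‖^2 :=
      setIntegral_nonneg (measurableSet_ball.diff measurableSet_ball) (fun x _ => hg0 x)
    have hber := main r hr
    have hstep : r⁻¹ * ∫ x in ball (0:E3) (3*r) \ ball (0:E3) (2*r), ‖u x‖^3
        ≤ r⁻¹ * (c * r * (∫ x in ball (0:E3) (4*r) \ ball (0:E3) r,
            ‖fderiv ℝ u x‖^2) ^ ((3:ℝ)/4) + c * r ^ ((1:ℝ)/2)) :=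
      mul_le_mul_of_nonneg_left hber (inv_nonneg.2 hr0.le)
    have hrsplit : r⁻¹ * (c * r * (∫ x in ball (0:E3) (4*r) \ ball (0:E3) r,
          ‖fderiv ℝ u x‖^2) ^ ((3:ℝ)/4) + c * r ^ ((1:ℝ)/2))
        = c * (∫ x in ball (0:E3) (4*r) \ ball (0:E3) r,
            ‖fderiv ℝ u x‖^2) ^ ((3:ℝ)/4) + c * r ^ (-((1:ℝ)/2)) := by
      have hrr : r ^ (-((1:ℝ)/2)) = r⁻¹ * r ^ ((1:ℝ)/2) := by
        rw [← Real.rpow_neg_one r, ← Real.rpow_add hr0]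
        norm_num
      rw [hrr]
      field_simp
    rw [hrsplit] at hstep
    refine le_trans hstep ?_
    have := Real.rpow_le_rpow hD0 hDsub (by norm_num : (0:ℝ) ≤ (3:ℝ)/4)
    have := mul_le_mul_of_nonneg_left this hc0.le
    linarith
end
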